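/- arXiv:2402.03458 — 13 statements merged into one kernel-verified Lean document; each statement's English description precedes it below -/
import Mathlib

section
/- Let u : ℝ × ℝ → ℝ be smooth and satisfy u_t + A(t) u_{xxxxx} + B(t) u_{xxx} + C(t) u u_{xxx} + E(t) u u_x + F(t) u_x u_{xx} + Q(t) u = 0, where A, B, C, E, F, Q : ℝ → ℝ are continuous. Let k₁, k₂, k₃ ∈ ℝ, let λ : ℝ → ℝ be differentiable with λ'(t) ≠ 0 for all t, and let μ : ℝ → ℝ be differentiable. Suppose ũ : ℝ × ℝ → ℝ is smooth and satisfies ũ(λ(t), (x+k₂)e^{k₁}) = e^{k₁/2 + k₃ μ(t)} u(t,x) for all (t,x), and that Ã, B̃, C̃, Ẽ, F̃, Q̃ : ℝ → ℝ satisfy, for all t: Ã(λ(t)) = e^{5k₁} A(t)/λ'(t), B̃(λ(t)) = e^{3k₁} B(t)/λ'(t), C̃(λ(t)) = e^{3k₁ - k₁/2 - k₃μ(t)} C(t)/λ'(t), Ẽ(λ(t)) = e^{k₁ - k₁/2 - k₃μ(t)} E(t)/λ'(t), F̃(λ(t)) = e^{3k₁ - k₁/2 - k₃μ(t)} F(t)/λ'(t),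 Q̃(λ(t)) = (Q(t) - k₃ μ'(t))/λ'(t). Then for all (t,x), writing t̃ = λ(t) and x̃ = (x+k₂)e^{k₁}, one has ũ_{t̃}(t̃,x̃) + Ã(t̃) ũ_{x̃x̃x̃x̃x̃}(t̃,x̃) + B̃(t̃) ũ_{x̃x̃x̃}(t̃,x̃) + C̃(t̃) ũ(t̃,x̃) ũ_{x̃x̃x̃}(t̃,x̃) + Ẽ(t̃) ũ(t̃,x̃) ũ_{x̃}(t̃,x̃) + F̃(t̃) ũ_{x̃}(t̃,x̃) ũ_{x̃x̃}(t̃,x̃) + Q̃(t̃) ũ(t̃,x̃) = 0. -/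
/-- Partial derivative of `u(t,x)` with respect to `t`. -/
noncomputable def pdt (u : ℝ × ℝ → ℝ) (t x : ℝ) : ℝ :=
  deriv (fun s => u (s, x)) t

/-- `n`-th partial derivative of `u(t,x)` with respect to `x`. -/
noncomputable def pdx (n : ℕ) (u : ℝ × ℝ → ℝ) (t x : ℝ) : ℝ :=
  iteratedDeriv n (fun y => u (t, y)) x

/-- Iterated derivative of a scalar multiple. -/
lemma iteratedDeriv_cmul {n : ℕ} {f : ℝ → ℝ} (hf : ContDiff ℝ n f) (c x : ℝ) :
    iteratedDeriv n (fun y => c * f y) x = c * iteratedDeriv n f x := by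
  have := iteratedDerivWithin_const_smul (𝕜 := ℝ) (f := f) (s := Set.univ) (x := x)
    (Set.mem_univ x) uniqueDiffOn_univ c hf.contDiffWithinAt
  simpa [iteratedDerivWithin_univ, smul_eq_mul, Pi.smul_def] using this

/-- Iterated derivative of an affine precomposition. -/
lemma iteratedDeriv_affine {n : ℕ} {f : ℝ → ℝ} (hf : ContDiff ℝ (⊤ : ℕ∞) f) (a b x : ℝ) :
    iteratedDeriv n (fun y => f (a * y + b)) x = a ^ n * iteratedDeriv n f (a * x + b) := by
  have h1 : (fun y => f (a * y + b)) = fun y => (fun z => f (z + b)) (a * y) := by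
    funext y; rfl
  have hshift : ContDiff ℝ n (fun z => f (z + b)) := by
    exact (hf.of_le (by exact_mod_cast le_top)).comp (contDiff_id.add contDiff_const)
  rw [h1, iteratedDeriv_comp_const_mul hshift a, iteratedDeriv_comp_add_const]

/-- The equivalence transformations `t̃ = λ(t)`, `x̃ = (x+k₂)e^{k₁}`,
`ũ = e^{k₁/2 + k₃ μ(t)} u` map every equation of the damped fifth-order KdV class (1)
into another equation of the same class with the transformed coefficients. -/
theorem equivalence_transformation_class1
    (A B C E F Q : ℝ → ℝ)
    (hA : Continuous A) (hB : Continuous B) (hC : Continuous C)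
    (hE : Continuous E) (hF : Continuous F) (hQ : Continuous Q)
    (u : ℝ × ℝ → ℝ) (hu : ContDiff ℝ (⊤ : ℕ∞) u)
    (hpde : ∀ t x,
      pdt u t x + A t * pdx 5 u t x + B t * pdx 3 u t x
        + C t * u (t, x) * pdx 3 u t x + E t * u (t, x) * pdx 1 u t x
        + F t * pdx 1 u t x * pdx 2 u t x + Q t * u (t, x) = 0)
    (k₁ k₂ k₃ : ℝ)
    (lam : ℝ → ℝ) (hlam : Differentiable ℝ lam) (hlam' : ∀ t, deriv lam t ≠ 0)
    (μ : ℝ → ℝ) (hμ : Differentiable ℝ μ)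
    (ut : ℝ × ℝ → ℝ) (hut : ContDiff ℝ (⊤ : ℕ∞) ut)
    (hrel : ∀ t x, ut (lam t, (x + k₂) * Real.exp k₁)
      = Real.exp (k₁ / 2 + k₃ * μ t) * u (t, x))
    (At Bt Ct Et Ft Qt : ℝ → ℝ)
    (hAt : ∀ t, At (lam t) = Real.exp (5 * k₁) * A t / deriv lam t)
    (hBt : ∀ t, Bt (lam t) = Real.exp (3 * k₁) * B t / deriv lam t)
    (hCt : ∀ t, Ct (lam t) = Real.exp (3 * k₁ - k₁ / 2 - k₃ * μ t) * C t / deriv lam t)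
    (hEt : ∀ t, Et (lam t) = Real.exp (k₁ - k₁ / 2 - k₃ * μ t) * E t / deriv lam t)
    (hFt : ∀ t, Ft (lam t) = Real.exp (3 * k₁ - k₁ / 2 - k₃ * μ t) * F t / deriv lam t)
    (hQt : ∀ t, Qt (lam t) = (Q t - k₃ * deriv μ t) / deriv lam t) :
    ∀ t x,
      pdt ut (lam t) ((x + k₂) * Real.exp k₁)
      + At (lam t) * pdx 5 ut (lam t) ((x + k₂) * Real.exp k₁)
      + Bt (lam t) * pdx 3 ut (lam t) ((x + k₂) * Real.exp k₁)
      + Ct (lam t) * ut (lam t, (x + k₂) * Real.exp k₁)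
          * pdx 3 ut (lam t) ((x + k₂) * Real.exp k₁)
      + Et (lam t) * ut (lam t, (x + k₂) * Real.exp k₁)
          * pdx 1 ut (lam t) ((x + k₂) * Real.exp k₁)
      + Ft (lam t) * pdx 1 ut (lam t) ((x + k₂) * Real.exp k₁)
          * pdx 2 ut (lam t) ((x + k₂) * Real.exp k₁)
      + Qt (lam t) * ut (lam t, (x + k₂) * Real.exp k₁) = 0 := by
  intro t x
  set a : ℝ := Real.exp (-k₁) with ha
  set c : ℝ := Real.exp (k₁ / 2 + k₃ * μ t) with hc
  have hae : a * Real.exp k₁ = 1 := by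
    rw [ha, ← Real.exp_add]; simp
  set X : ℝ := (x + k₂) * Real.exp k₁ with hX
  -- the slice in x of ut at time lam t
  have hslice : (fun y => ut (lam t, y)) = fun y => c * u (t, a * y + (-k₂)) := by
    funext y
    have h0 := hrel t (a * y - k₂)
    have hy : (a * y - k₂ + k₂) * Real.exp k₁ = y := by
      rw [show (a * y - k₂ + k₂) * Real.exp k₁ = (a * Real.exp k₁) * y by ring, hae, one_mul]
    rw [hy] at h0
    rw [hc]
    simpa [sub_eq_add_neg] using h0
  -- spatial derivatives of ut in terms of those of u
  have hxslice : a * X + (-k₂) = x := by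
    have h1 : a * X = x + k₂ := by
      rw [hX, show a * ((x + k₂) * Real.exp k₁) = (a * Real.exp k₁) * (x + k₂) by ring,
        hae, one_mul]
    rw [h1]; ring
  have husmooth : ContDiff ℝ (⊤ : ℕ∞) (fun y => u (t, y)) :=
    hu.comp (contDiff_const.prodMk contDiff_id)
  have hpdx : ∀ n : ℕ, pdx n ut (lam t) X = c * a ^ n * pdx n u t x := by
    intro n
    unfold pdx
    rw [hslice]
    have hcm : ContDiff ℝ n fun y => u (t, a * y + (-k₂)) := by
      exact (husmooth.of_le (by exact_mod_cast le_top)).comp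
        ((contDiff_const.mul contDiff_id).add contDiff_const)
    rw [iteratedDeriv_cmul hcm c, iteratedDeriv_affine husmooth a (-k₂) X, hxslice]
    ring
  -- time derivative
  have hcomp : (fun s => ut (s, X)) ∘ lam = fun s => Real.exp (k₁ / 2 + k₃ * μ s) * u (s, x) := by
    funext s
    exact hrel s x
  have hut_slice : Differentiable ℝ (fun s => ut (s, X)) :=
    (hut.differentiable (by simp)).comp (differentiable_id.prodMk (differentiable_const X))
  have hu_slice : Differentiable ℝ (fun s => u (s, x)) :=
    (hu.differentiable (by simp)).comp (differentiable_id.prodMk (differentiable_const x))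
  have hderiv_comp : deriv ((fun s => ut (s, X)) ∘ lam) t
      = pdt ut (lam t) X * deriv lam t := by
    rw [deriv_comp (x := t) (hut_slice _) (hlam t)]; rfl
  have hderiv_rhs : deriv (fun s => Real.exp (k₁ / 2 + k₃ * μ s) * u (s, x)) t
      = k₃ * deriv μ t * c * u (t, x) + c * pdt u t x := by
    have hexp : HasDerivAt (fun s => Real.exp (k₁ / 2 + k₃ * μ s))
        (Real.exp (k₁ / 2 + k₃ * μ t) * (k₃ * deriv μ t)) t := by
      have hμ' : HasDerivAt (fun s => k₁ / 2 + k₃ * μ s) (k₃ * deriv μ t) t := by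
        simpa using ((hμ t).hasDerivAt.const_mul k₃).const_add (k₁ / 2)
      exact hμ'.exp
    have hux : HasDerivAt (fun s => u (s, x)) (pdt u t x) t := (hu_slice t).hasDerivAt
    have : deriv (fun s => Real.exp (k₁ / 2 + k₃ * μ s) * u (s, x)) t = _ := (hexp.mul hux).deriv
    rw [this]; rw [← hc]; unfold pdt; ring
  have hpdt : pdt ut (lam t) X
      = (k₃ * deriv μ t * c * u (t, x) + c * pdt u t x) / deriv lam t := by
    have h1 : pdt ut (lam t) X * deriv lam t
        = k₃ * deriv μ t * c * u (t, x) + c * pdt u t x := by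
      rw [← hderiv_comp, hcomp, hderiv_rhs]
    field_simp [hlam' t] at h1 ⊢
    linarith [h1]
  -- value of ut
  have hval : ut (lam t, X) = c * u (t, x) := hrel t x
  -- now rewrite everything
  rw [hval, hpdt, hpdx 5, hpdx 3, hpdx 2, hpdx 1,
    hAt, hBt, hCt, hEt, hFt, hQt]
  have hpde' := hpde t x
  have hL := hlam' t
  -- express exponentials
  have e1 : Real.exp (5 * k₁) * a ^ 5 = 1 := by
    rw [ha, ← Real.exp_nat_mul, ← Real.exp_add]; norm_num
  have e2 : Real.exp (3 * k₁) * a ^ 3 = 1 := by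
    rw [ha, ← Real.exp_nat_mul, ← Real.exp_add]; norm_num
  have e3 : Real.exp (3 * k₁ - k₁ / 2 - k₃ * μ t) * c * a ^ 3 = 1 := by
    rw [ha, hc, ← Real.exp_nat_mul, ← Real.exp_add, ← Real.exp_add]; norm_num
  have e4 : Real.exp (k₁ - k₁ / 2 - k₃ * μ t) * c * a ^ 1 = 1 := by
    rw [ha, hc, ← Real.exp_nat_mul, ← Real.exp_add, ← Real.exp_add]; norm_num
  linear_combination (c / deriv lam t) * hpde'
    + (A t * pdx 5 u t x * c / deriv lam t) * e1
    + (B t * pdx 3 u t x * c / deriv lam t) * e2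
    + ((C t * u (t, x) * pdx 3 u t x + F t * pdx 1 u t x * pdx 2 u t x) * c / deriv lam t) * e3
    + (E t * u (t, x) * pdx 1 u t x * c / deriv lam t) * e4
end

section
/- Let u : ℝ × ℝ → ℝ be smooth and satisfy u_t + A(t) u_{xxxxx} + B(t) u_{xxx} + C(t) u u_{xxx} + E(t) u u_x + F(t) u_x u_{xx} = 0, where A, B, C, E, F : ℝ → ℝ are continuous. Let k₁, k₂, k₃ ∈ ℝ and let λ : ℝ → ℝ be differentiable with λ'(t) ≠ 0 for all t. Suppose ũ : ℝ × ℝ → ℝ is smooth and satisfies ũ(λ(t), (x+k₂)e^{k₁}) = e^{k₃} u(t,x) for all (t,x), and that Ã, B̃, C̃, Ẽ, F̃ : ℝ → ℝ satisfy, for all t: Ã(λ(t)) = e^{5k₁} A(t)/λ'(t), B̃(λ(t)) = e^{3k₁} B(t)/λ'(t), C̃(λ(t)) = e^{3k₁ - k₃} C(t)/λ'(t), Ẽ(λ(t)) = e^{k₁ - k₃} E(t)/λ'(t), F̃(λ(t)) = e^{3k₁ - k₃} F(t)/λ'(t). Then for all (t,x), writing t̃ = λ(t) and x̃ = (x+k₂)e^{k₁},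 one has ũ_{t̃}(t̃,x̃) + Ã(t̃) ũ_{x̃x̃x̃x̃x̃}(t̃,x̃) + B̃(t̃) ũ_{x̃x̃x̃}(t̃,x̃) + C̃(t̃) ũ(t̃,x̃) ũ_{x̃x̃x̃}(t̃,x̃) + Ẽ(t̃) ũ(t̃,x̃) ũ_{x̃}(t̃,x̃) + F̃(t̃) ũ_{x̃}(t̃,x̃) ũ_{x̃x̃}(t̃,x̃) = 0. -/
/-- iterated derivative of `z ↦ c * f (a*z + b)`. -/
lemma iteratedDeriv_affine_aux (f : ℝ → ℝ) (hf : ContDiff ℝ (⊤ : ℕ∞) f) (c a b : ℝ) (n : ℕ) :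
    ∀ y, iteratedDeriv n (fun z => c * f (a * z + b)) y
      = c * a ^ n * iteratedDeriv n f (a * y + b) := by
  induction n with
  | zero => intro y; simp
  | succ n ih =>
    intro y
    have hF : Differentiable ℝ (iteratedDeriv n f) :=
      hf.differentiable_iteratedDeriv n (lt_of_le_of_ne (by exact_mod_cast le_top) (by exact_mod_cast (WithTop.natCast_ne_top n : (n : ℕ∞) ≠ ⊤)))
    have hfun : iteratedDeriv n (fun z => c * f (a * z + b))
        = fun y => c * a ^ n * iteratedDeriv n f (a * y + b) := funext ih
    rw [iteratedDeriv_succ, hfun]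
    have hd : HasDerivAt (fun w => iteratedDeriv n f (a * w + b))
        (deriv (iteratedDeriv n f) (a * y + b) * a) y := by
      have hin : HasDerivAt (fun w : ℝ => a * w + b) (a * 1) y :=
        ((hasDerivAt_id y).const_mul a).add_const b
      rw [mul_one] at hin
      exact (hF (a * y + b)).hasDerivAt.comp y hin
    have := (hd.const_mul (c * a ^ n)).deriv
    rw [this, iteratedDeriv_succ]
    ring

/-- The equivalence transformations `t̃ = λ(t)`, `x̃ = (x+k₂)e^{k₁}`, `ũ = e^{k₃} u`
map every equation of the undamped fifth-order KdV subclass (3)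
into another equation of the same subclass with the transformed coefficients. -/
theorem equivalence_transformation_subclass3
    (A B C E F : ℝ → ℝ)
    (hA : Continuous A) (hB : Continuous B) (hC : Continuous C)
    (hE : Continuous E) (hF : Continuous F)
    (u : ℝ × ℝ → ℝ) (hu : ContDiff ℝ (⊤ : ℕ∞) u)
    (hpde : ∀ t x,
      pdt u t x + A t * pdx 5 u t x + B t * pdx 3 u t x
        + C t * u (t, x) * pdx 3 u t x + E t * u (t, x) * pdx 1 u t x
        + F t * pdx 1 u t x * pdx 2 u t x = 0)
    (k₁ k₂ k₃ : ℝ)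
    (lam : ℝ → ℝ) (hlam : Differentiable ℝ lam) (hlam' : ∀ t, deriv lam t ≠ 0)
    (ut : ℝ × ℝ → ℝ) (hut : ContDiff ℝ (⊤ : ℕ∞) ut)
    (hrel : ∀ t x, ut (lam t, (x + k₂) * Real.exp k₁) = Real.exp k₃ * u (t, x))
    (At Bt Ct Et Ft : ℝ → ℝ)
    (hAt : ∀ t, At (lam t) = Real.exp (5 * k₁) * A t / deriv lam t)
    (hBt : ∀ t, Bt (lam t) = Real.exp (3 * k₁) * B t / deriv lam t)
    (hCt : ∀ t, Ct (lam t) = Real.exp (3 * k₁ - k₃) * C t / deriv lam t)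
    (hEt : ∀ t, Et (lam t) = Real.exp (k₁ - k₃) * E t / deriv lam t)
    (hFt : ∀ t, Ft (lam t) = Real.exp (3 * k₁ - k₃) * F t / deriv lam t) :
    ∀ t x,
      pdt ut (lam t) ((x + k₂) * Real.exp k₁)
      + At (lam t) * pdx 5 ut (lam t) ((x + k₂) * Real.exp k₁)
      + Bt (lam t) * pdx 3 ut (lam t) ((x + k₂) * Real.exp k₁)
      + Ct (lam t) * ut (lam t, (x + k₂) * Real.exp k₁)
          * pdx 3 ut (lam t) ((x + k₂) * Real.exp k₁)
      + Et (lam t) * ut (lam t, (x + k₂) * Real.exp k₁)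
          * pdx 1 ut (lam t) ((x + k₂) * Real.exp k₁)
      + Ft (lam t) * pdx 1 ut (lam t) ((x + k₂) * Real.exp k₁)
          * pdx 2 ut (lam t) ((x + k₂) * Real.exp k₁) = 0 := by
  intro t x
  set d : ℝ := deriv lam t with hd
  have hd0 : d ≠ 0 := hlam' t
  set xt : ℝ := (x + k₂) * Real.exp k₁ with hxt
  have hinv : Real.exp (-k₁) * Real.exp k₁ = 1 := by
    rw [← Real.exp_add]; simp
  -- x-derivatives
  have hpdx : ∀ n : ℕ, pdx n ut (lam t) xt
      = Real.exp k₃ * (Real.exp (-k₁)) ^ n * pdx n u t x := by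
    intro n
    have hfun : (fun y => ut (lam t, y))
        = fun y => Real.exp k₃ * (fun z => u (t, z)) (Real.exp (-k₁) * y + (-k₂)) := by
      funext y
      have hy : ((Real.exp (-k₁) * y + (-k₂)) + k₂) * Real.exp k₁ = y := by
        rw [Real.exp_neg]; field_simp; ring
      have h2 := hrel t (Real.exp (-k₁) * y + (-k₂))
      rw [hy] at h2
      simpa using h2
    have hfc : ContDiff ℝ (⊤ : ℕ∞) (fun z => u (t, z)) := hu.comp (ContDiff.prodMk contDiff_const contDiff_id)
    have key := iteratedDeriv_affine_aux (fun z => u (t, z)) hfc (Real.exp k₃)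
      (Real.exp (-k₁)) (-k₂) n xt
    have hx : Real.exp (-k₁) * xt + (-k₂) = x := by
      rw [hxt, ← mul_assoc, mul_comm (Real.exp (-k₁)) ((x + k₂)), mul_assoc, hinv]
      ring
    rw [pdx, hfun, key, hx, pdx]
  -- t-derivative
  have hpdt : pdt ut (lam t) xt = Real.exp k₃ * pdt u t x / d := by
    have hUT : Differentiable ℝ (fun s => ut (s, xt)) :=
      (hut.differentiable (by simp)).comp (differentiable_id.prodMk (differentiable_const _))
    have hU : Differentiable ℝ (fun s => u (s, x)) :=
      (hu.differentiable (by simp)).comp (differentiable_id.prodMk (differentiable_const _))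
    have hchain : HasDerivAt (fun s => ut (lam s, xt))
        (deriv (fun s => ut (s, xt)) (lam t) * d) t := by
      have := (hUT (lam t)).hasDerivAt.comp t (hlam t).hasDerivAt
      exact this
    have h1 : (fun s => ut (lam s, xt)) = fun s => Real.exp k₃ * u (s, x) := by
      funext s; exact hrel s x
    have h2 : HasDerivAt (fun s => Real.exp k₃ * u (s, x)) (Real.exp k₃ * pdt u t x) t :=
      (hU t).hasDerivAt.const_mul (Real.exp k₃)
    rw [h1] at hchain
    have := hchain.unique h2
    rw [pdt]
    field_simp
    linarith [this]
  -- exponential bookkeeping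
  have hpow : ∀ n : ℕ, (Real.exp (-k₁)) ^ n = Real.exp ((n : ℝ) * (-k₁)) := by
    intro n; rw [Real.exp_nat_mul]
  have key := hpde t x
  rw [hpdt, hpdx 5, hpdx 3, hpdx 2, hpdx 1, hrel t x, hAt, hBt, hCt, hEt, hFt,
    hpow 5, hpow 3, hpow 2, hpow 1, ← hd]
  have E1 : Real.exp (5 * k₁) * Real.exp (-(5 * k₁)) = 1 := by
    rw [← Real.exp_add]; simp
  have E2 : Real.exp (3 * k₁) * Real.exp (-(3 * k₁)) = 1 := by
    rw [← Real.exp_add]; simp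
  have E3 : Real.exp k₃ * Real.exp (3 * k₁ - k₃) * Real.exp (-(3 * k₁)) = 1 := by
    rw [← Real.exp_add, ← Real.exp_add,
      show k₃ + (3 * k₁ - k₃) + -(3 * k₁) = 0 by ring, Real.exp_zero]
  have E4 : Real.exp k₃ * Real.exp (k₁ - k₃) * Real.exp (-k₁) = 1 := by
    rw [← Real.exp_add, ← Real.exp_add,
      show k₃ + (k₁ - k₃) + -k₁ = 0 by ring, Real.exp_zero]
  have E5 : Real.exp k₃ * Real.exp (3 * k₁ - k₃) * Real.exp (-k₁) * Real.exp (-(2 * k₁)) = 1 := by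
    rw [← Real.exp_add, ← Real.exp_add, ← Real.exp_add,
      show k₃ + (3 * k₁ - k₃) + -k₁ + -(2 * k₁) = 0 by ring, Real.exp_zero]
  have hek : Real.exp k₃ ≠ 0 := Real.exp_ne_zero _
  field_simp
  linear_combination (norm := (push_cast; ring_nf)) Real.exp k₃ * key
    + Real.exp k₃ * A t * pdx 5 u t x * E1
    + Real.exp k₃ * B t * pdx 3 u t x * E2
    + Real.exp k₃ * C t * u (t, x) * pdx 3 u t x * E3
    + Real.exp k₃ * E t * u (t, x) * pdx 1 u t x * E4
    + Real.exp k₃ * F t * pdx 1 u t x * pdx 2 u t x * E5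
end

section
/- Let k₁, k₃ ∈ ℝ and let λ : ℝ → ℝ be twice differentiable with λ'(t) ≠ 0 for all t. Let A, B : ℝ → ℝ be differentiable with B(t) ≠ 0 for all t, and let Ã, B̃ : ℝ → ℝ be differentiable with Ã(λ(t)) = e^{5k₁} A(t)/λ'(t) and B̃(λ(t)) = e^{3k₁} B(t)/λ'(t) for all t. Then for every t, Ã(λ(t)) (Ã'(λ(t)) B̃(λ(t)) − Ã(λ(t)) B̃'(λ(t)))² / B̃(λ(t))⁷ = A(t) (A'(t) B(t) − A(t) B'(t))² / B(t)⁷. That is, J₁⁽¹⁾ = A(A_t B − A B_t)²/B⁷ is a differential invariant of first order of the equivalence group of subclass (3). -/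
lemma deriv_transformed
    (lam : ℝ → ℝ) (hlam : Differentiable ℝ lam)
    (hlam2 : Differentiable ℝ (deriv lam)) (hlam' : ∀ t, deriv lam t ≠ 0)
    (c : ℝ) (F : ℝ → ℝ) (hF : Differentiable ℝ F)
    (Ft : ℝ → ℝ) (hFt : Differentiable ℝ Ft)
    (hFtr : ∀ t, Ft (lam t) = c * F t / deriv lam t) (t : ℝ) :
    deriv Ft (lam t) =
      (c * deriv F t * deriv lam t - c * F t * deriv (deriv lam) t)
        / (deriv lam t) ^ 2 / deriv lam t := by
  have h1 : HasDerivAt (fun s => Ft (lam s)) (deriv Ft (lam t) * deriv lam t) t :=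
    (hFt (lam t)).hasDerivAt.comp t (hlam t).hasDerivAt
  have h2 : HasDerivAt (fun s => c * F s / deriv lam s)
      ((c * deriv F t * deriv lam t - c * F t * deriv (deriv lam) t)
        / (deriv lam t) ^ 2) t := by
    exact (((hF t).hasDerivAt.const_mul c).div (hlam2 t).hasDerivAt (hlam' t))
  have heq : (fun s => Ft (lam s)) = fun s => c * F s / deriv lam s :=
    funext hFtr
  rw [heq] at h1
  have h3 := h1.unique h2
  have hL := hlam' t
  field_simp at h3 ⊢
  linear_combination h3

/-- `J₁⁽¹⁾ = A(A_t B − A B_t)²/B⁷` is a first-order differential invariant of the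
equivalence group of the undamped fifth-order KdV subclass (3). -/
theorem J1_first_order_invariant
    (k₁ k₃ : ℝ)
    (lam : ℝ → ℝ) (hlam : Differentiable ℝ lam)
    (hlam2 : Differentiable ℝ (deriv lam)) (hlam' : ∀ t, deriv lam t ≠ 0)
    (A B : ℝ → ℝ) (hA : Differentiable ℝ A) (hB : Differentiable ℝ B)
    (hBne : ∀ t, B t ≠ 0)
    (At Bt : ℝ → ℝ) (hAt : Differentiable ℝ At) (hBt : Differentiable ℝ Bt)
    (hAtr : ∀ t, At (lam t) = Real.exp (5 * k₁) * A t / deriv lam t)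
    (hBtr : ∀ t, Bt (lam t) = Real.exp (3 * k₁) * B t / deriv lam t) :
    ∀ t,
      At (lam t) * (deriv At (lam t) * Bt (lam t) - At (lam t) * deriv Bt (lam t)) ^ 2
          / Bt (lam t) ^ 7
        = A t * (deriv A t * B t - A t * deriv B t) ^ 2 / B t ^ 7 := by
  intro t
  have hdA := deriv_transformed lam hlam hlam2 hlam' (Real.exp (5 * k₁)) A hA At hAt hAtr t
  have hdB := deriv_transformed lam hlam hlam2 hlam' (Real.exp (3 * k₁)) B hB Bt hBt hBtr t
  rw [hAtr, hBtr, hdA, hdB,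
      show Real.exp (5 * k₁) = (Real.exp k₁)^5 by rw [← Real.exp_nat_mul]; norm_num,
      show Real.exp (3 * k₁) = (Real.exp k₁)^3 by rw [← Real.exp_nat_mul]; norm_num]
  have hL := hlam' t
  have hBn := hBne t
  have he := (Real.exp_pos k₁).ne'
  field_simp
  ring
end

section
/- Let k₁, k₃ ∈ ℝ and let λ : ℝ → ℝ be twice differentiable with λ'(t) ≠ 0 for all t. Let A, B, C : ℝ → ℝ be differentiable with B(t) ≠ 0 and C(t) ≠ 0 for all t, and let Ã, B̃, C̃ : ℝ → ℝ be differentiable with Ã(λ(t)) = e^{5k₁} A(t)/λ'(t), B̃(λ(t)) = e^{3k₁} B(t)/λ'(t), C̃(λ(t)) = e^{3k₁-k₃} C(t)/λ'(t) for all t. Then for every t, Ã(λ(t)) (Ã'(λ(t)) C̃(λ(t)) − Ã(λ(t)) C̃'(λ(t)))² / (B̃(λ(t))⁵ C̃(λ(t))²) = A(t) (A'(t) C(t) − A(t) C'(t))² / (B(t)⁵ C(t)²). That is, J₂⁽¹⁾ = A(A_t C − A C_t)²/(B⁵C²) is a differential invariant of first order of the equivalence group of subclass (3). -/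
/-!
Writing `W(f, g) = f g' - f' g`, the bracket in `J₂⁽¹⁾` is `W(C, A)`. Under a change of time
`t̃ = λ(t)` the Wronskian picks up one factor `λ'` (chain rule), and rescaling both functions by
the same factor `1/λ'` multiplies it by `1/λ'²`, the `λ''` terms cancelling. Hence `W̃(C̃, Ã)`
carries `λ'⁻³`, and `J₂⁽¹⁾` is homogeneous of degree `-7` in `λ'` both upstairs and downstairs.
The constants cancel because `e^{5k₁}³ = e^{3k₁}⁵`.
-/

noncomputable section

variable {𝕜 : Type*} [NontriviallyNormedField 𝕜]

def wronskian (f g : 𝕜 → 𝕜) (t : 𝕜) : 𝕜 :=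
  f t * deriv g t - deriv f t * g t

theorem wronskian_comp {f g φ : 𝕜 → 𝕜} {t : 𝕜} (hf : DifferentiableAt 𝕜 f (φ t))
    (hg : DifferentiableAt 𝕜 g (φ t)) (hφ : DifferentiableAt 𝕜 φ t) :
    wronskian (f ∘ φ) (g ∘ φ) t = deriv φ t * wronskian f g (φ t) := by
  unfold wronskian
  rw [deriv_comp t hf hφ, deriv_comp t hg hφ, Function.comp_apply, Function.comp_apply]
  ring

theorem wronskian_const_mul_div {f g u : 𝕜 → 𝕜} {t : 𝕜} (a b : 𝕜)
    (hf : DifferentiableAt 𝕜 f t) (hg : DifferentiableAt 𝕜 g t) (hu : DifferentiableAt 𝕜 u t)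
    (hut : u t ≠ 0) :
    wronskian (fun s => a * f s / u s) (fun s => b * g s / u s) t
      = a * b * wronskian f g t / u t ^ 2 := by
  have hdf : HasDerivAt (fun s => a * f s / u s) _ t :=
    (hf.hasDerivAt.const_mul a).div hu.hasDerivAt hut
  have hdg : HasDerivAt (fun s => b * g s / u s) _ t :=
    (hg.hasDerivAt.const_mul b).div hu.hasDerivAt hut
  unfold wronskian
  rw [hdf.deriv, hdg.deriv]
  field_simp
  ring

theorem wronskian_of_comp_eq_div {f g F G φ : 𝕜 → 𝕜} {a b t : 𝕜}
    (hf : DifferentiableAt 𝕜 f (φ t)) (hg : DifferentiableAt 𝕜 g (φ t))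
    (hF : DifferentiableAt 𝕜 F t) (hG : DifferentiableAt 𝕜 G t)
    (hφ : DifferentiableAt 𝕜 φ t) (hφ' : DifferentiableAt 𝕜 (deriv φ) t) (hφt : deriv φ t ≠ 0)
    (hfF : f ∘ φ = fun s => a * F s / deriv φ s) (hgG : g ∘ φ = fun s => b * G s / deriv φ s) :
    wronskian f g (φ t) = a * b * wronskian F G t / deriv φ t ^ 3 := by
  have hcomp := wronskian_comp hf hg hφ
  rw [hfF, hgG, wronskian_const_mul_div a b hF hG hφ' hφt, div_eq_iff (pow_ne_zero 2 hφt)] at hcomp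
  rw [eq_div_iff (pow_ne_zero 3 hφt), hcomp]
  ring

theorem J2_rescale_eq {K : Type*} [Field K] {a b c w cA cB cC L : K}
    (hcA : cA ^ 3 = cB ^ 5) (hcB : cB ≠ 0) (hcC : cC ≠ 0) (hL : L ≠ 0) :
    cA * a / L * (cC * cA * w / L ^ 3) ^ 2 / ((cB * b / L) ^ 5 * (cC * c / L) ^ 2)
      = a * w ^ 2 / (b ^ 5 * c ^ 2) := by
  have hk : cB ^ 5 * cC ^ 2 / L ^ 7 ≠ 0 := by positivity
  rw [← mul_div_mul_left (a * w ^ 2) (b ^ 5 * c ^ 2) hk]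
  congr 1
  · rw [← hcA]
    field_simp
  · field_simp

end

theorem J2_first_order_invariant_general
    (k₁ k₃ : ℝ)
    (lam : ℝ → ℝ) (hlam : Differentiable ℝ lam)
    (hlam2 : Differentiable ℝ (deriv lam)) (hlam' : ∀ t, deriv lam t ≠ 0)
    (A B C : ℝ → ℝ) (hA : Differentiable ℝ A)
    (hC : Differentiable ℝ C)
    (At Bt Ct : ℝ → ℝ) (hAt : Differentiable ℝ At)
    (hCt : Differentiable ℝ Ct)
    (hAtr : ∀ t, At (lam t) = Real.exp (5 * k₁) * A t / deriv lam t)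
    (hBtr : ∀ t, Bt (lam t) = Real.exp (3 * k₁) * B t / deriv lam t)
    (hCtr : ∀ t, Ct (lam t) = Real.exp (3 * k₁ - k₃) * C t / deriv lam t) :
    ∀ t,
      At (lam t) * (deriv At (lam t) * Ct (lam t) - At (lam t) * deriv Ct (lam t)) ^ 2
          / (Bt (lam t) ^ 5 * Ct (lam t) ^ 2)
        = A t * (deriv A t * C t - A t * deriv C t) ^ 2 / (B t ^ 5 * C t ^ 2) := by
  intro t
  have hbracket : ∀ (f g : ℝ → ℝ) (s : ℝ), deriv f s * g s - f s * deriv g s = wronskian g f s :=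
    fun f g s => by unfold wronskian; ring
  have hexp : Real.exp (5 * k₁) ^ 3 = Real.exp (3 * k₁) ^ 5 := by
    rw [← Real.exp_nat_mul, ← Real.exp_nat_mul]
    ring_nf
  rw [hbracket, hbracket, hAtr, hBtr, hCtr,
    wronskian_of_comp_eq_div (hCt _) (hAt _) (hC t) (hA t) (hlam t) (hlam2 t) (hlam' t)
      (funext hCtr) (funext hAtr)]
  exact J2_rescale_eq hexp (Real.exp_ne_zero _) (Real.exp_ne_zero _) (hlam' t)

/-- `J₂⁽¹⁾ = A(A_t C − A C_t)²/(B⁵C²)` is a first-order differential invariant of the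
equivalence group of the undamped fifth-order KdV subclass (3). -/
theorem J2_first_order_invariant
    (k₁ k₃ : ℝ)
    (lam : ℝ → ℝ) (hlam : Differentiable ℝ lam)
    (hlam2 : Differentiable ℝ (deriv lam)) (hlam' : ∀ t, deriv lam t ≠ 0)
    (A B C : ℝ → ℝ) (hA : Differentiable ℝ A) (hB : Differentiable ℝ B)
    (hC : Differentiable ℝ C)
    (hBne : ∀ t, B t ≠ 0) (hCne : ∀ t, C t ≠ 0)
    (At Bt Ct : ℝ → ℝ) (hAt : Differentiable ℝ At) (hBt : Differentiable ℝ Bt)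
    (hCt : Differentiable ℝ Ct)
    (hAtr : ∀ t, At (lam t) = Real.exp (5 * k₁) * A t / deriv lam t)
    (hBtr : ∀ t, Bt (lam t) = Real.exp (3 * k₁) * B t / deriv lam t)
    (hCtr : ∀ t, Ct (lam t) = Real.exp (3 * k₁ - k₃) * C t / deriv lam t) :
    ∀ t,
      At (lam t) * (deriv At (lam t) * Ct (lam t) - At (lam t) * deriv Ct (lam t)) ^ 2
          / (Bt (lam t) ^ 5 * Ct (lam t) ^ 2)
        = A t * (deriv A t * C t - A t * deriv C t) ^ 2 / (B t ^ 5 * C t ^ 2) :=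
  J2_first_order_invariant_general k₁ k₃ lam hlam hlam2 hlam' A B C hA hC At Bt Ct hAt hCt hAtr hBtr
    hCtr
end

section
/- Let k₁, k₃ ∈ ℝ and let λ : ℝ → ℝ be twice differentiable with λ'(t) ≠ 0 for all t. Let A, B, C, F : ℝ → ℝ be differentiable with B(t) ≠ 0 and C(t) ≠ 0 for all t, and let Ã, B̃, C̃, F̃ : ℝ → ℝ be differentiable with Ã(λ(t)) = e^{5k₁} A(t)/λ'(t), B̃(λ(t)) = e^{3k₁} B(t)/λ'(t), C̃(λ(t)) = e^{3k₁-k₃} C(t)/λ'(t), F̃(λ(t)) = e^{3k₁-k₃} F(t)/λ'(t) for all t. Then for every t, Ã(λ(t)) (Ã'(λ(t)) F̃(λ(t)) − Ã(λ(t)) F̃'(λ(t)))² / (B̃(λ(t))⁵ C̃(λ(t))²) = A(t) (A'(t) F(t) − A(t) F'(t))² / (B(t)⁵ C(t)²). That is, J₄⁽¹⁾ = A(A_t F − A F_t)²/(B⁵C²) is a differential invariant of first order of the equivalence group of subclass (3). -/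
/-! Each coefficient transforms as `G̃ ∘ λ = c G / λ'`, so differentiating brings in `λ''`
terms; in the Wronskian `A_t F - A F_t` these cancel, leaving `W̃ ∘ λ = e^{5k₁} e^{3k₁-k₃} W / λ'³`.
In `A W² / (B⁵ C²)` both numerator and denominator then carry `λ'⁻⁷`, and the exponential
factors `e^{15k₁} e^{2(3k₁-k₃)}` agree as well. -/

open Real

lemma deriv_comp_eq_of_comp_eq_mul_div_deriv {lam g g' : ℝ → ℝ} {c t : ℝ}
    (hlam2 : Differentiable ℝ (deriv lam)) (hlam' : deriv lam t ≠ 0)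
    (hg : DifferentiableAt ℝ g t) (hg' : DifferentiableAt ℝ g' (lam t))
    (h : ∀ s, g' (lam s) = c * g s / deriv lam s) :
    deriv g' (lam t) =
      c * (deriv g t * deriv lam t - g t * deriv (deriv lam) t) / deriv lam t ^ 3 := by
  have hchain : deriv (fun s => g' (lam s)) t = deriv g' (lam t) * deriv lam t :=
    deriv_comp t hg' (differentiableAt_of_deriv_ne_zero hlam')
  have hquot : deriv (fun s => c * g s / deriv lam s) t
      = (c * deriv g t * deriv lam t - c * g t * deriv (deriv lam) t) / deriv lam t ^ 2 := by
    rw [deriv_fun_div (hg.const_mul c) (hlam2 t) hlam', deriv_const_mul c hg]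
  rw [funext h, hquot] at hchain
  field_simp at hchain ⊢
  linarith

lemma wronskian_transform {a f A A' F F' μ μ' : ℝ} (hμ : μ ≠ 0) :
    a * (A' * μ - A * μ') / μ ^ 3 * (f * F / μ) - a * A / μ * (f * (F' * μ - F * μ') / μ ^ 3)
      = a * f * (A' * F - A * F') / μ ^ 3 := by
  field_simp
  ring

lemma J4_scale {a b c A B C W μ : ℝ} (hab : a ^ 3 = b ^ 5) (ha : a ≠ 0) (hc : c ≠ 0)
    (hμ : μ ≠ 0) :
    a * A / μ * (a * c * W / μ ^ 3) ^ 2 / ((b * B / μ) ^ 5 * (c * C / μ) ^ 2)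
      = A * W ^ 2 / (B ^ 5 * C ^ 2) := by
  have hscale : a ^ 3 * c ^ 2 / μ ^ 7 ≠ 0 := by positivity
  calc a * A / μ * (a * c * W / μ ^ 3) ^ 2 / ((b * B / μ) ^ 5 * (c * C / μ) ^ 2)
      = a ^ 3 * c ^ 2 / μ ^ 7 * (A * W ^ 2) / (a ^ 3 * c ^ 2 / μ ^ 7 * (B ^ 5 * C ^ 2)) := by
        rw [div_pow (b * B), mul_pow b, ← hab]; field_simp
    _ = A * W ^ 2 / (B ^ 5 * C ^ 2) := mul_div_mul_left _ _ hscale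

lemma exp_five_mul_pow_three (k : ℝ) : exp (5 * k) ^ 3 = exp (3 * k) ^ 5 := by
  rw [← exp_nat_mul, ← exp_nat_mul]
  ring_nf

theorem J4_first_order_invariant_general
    (k₁ k₃ : ℝ)
    (lam : ℝ → ℝ)
    (hlam2 : Differentiable ℝ (deriv lam)) (hlam' : ∀ t, deriv lam t ≠ 0)
    (A B C F : ℝ → ℝ) (hA : Differentiable ℝ A)
    (hF : Differentiable ℝ F)
    (At Bt Ct Ft : ℝ → ℝ) (hAt : Differentiable ℝ At)
    (hFt : Differentiable ℝ Ft)
    (hAtr : ∀ t, At (lam t) = Real.exp (5 * k₁) * A t / deriv lam t)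
    (hBtr : ∀ t, Bt (lam t) = Real.exp (3 * k₁) * B t / deriv lam t)
    (hCtr : ∀ t, Ct (lam t) = Real.exp (3 * k₁ - k₃) * C t / deriv lam t)
    (hFtr : ∀ t, Ft (lam t) = Real.exp (3 * k₁ - k₃) * F t / deriv lam t) :
    ∀ t,
      At (lam t) * (deriv At (lam t) * Ft (lam t) - At (lam t) * deriv Ft (lam t)) ^ 2
          / (Bt (lam t) ^ 5 * Ct (lam t) ^ 2)
        = A t * (deriv A t * F t - A t * deriv F t) ^ 2 / (B t ^ 5 * C t ^ 2) := by
  intro t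
  have hA' := deriv_comp_eq_of_comp_eq_mul_div_deriv hlam2 (hlam' t) (hA t) (hAt _) hAtr
  have hF' := deriv_comp_eq_of_comp_eq_mul_div_deriv hlam2 (hlam' t) (hF t) (hFt _) hFtr
  rw [hAtr, hBtr, hCtr, hFtr, hA', hF', wronskian_transform (hlam' t)]
  exact J4_scale (exp_five_mul_pow_three k₁) (exp_ne_zero _) (exp_ne_zero _) (hlam' t)

/-- `J₄⁽¹⁾ = A(A_t F − A F_t)²/(B⁵C²)` is a first-order differential invariant of the
equivalence group of the undamped fifth-order KdV subclass (3). -/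
theorem J4_first_order_invariant
    (k₁ k₃ : ℝ)
    (lam : ℝ → ℝ) (hlam : Differentiable ℝ lam)
    (hlam2 : Differentiable ℝ (deriv lam)) (hlam' : ∀ t, deriv lam t ≠ 0)
    (A B C F : ℝ → ℝ) (hA : Differentiable ℝ A) (hB : Differentiable ℝ B)
    (hC : Differentiable ℝ C) (hF : Differentiable ℝ F)
    (hBne : ∀ t, B t ≠ 0) (hCne : ∀ t, C t ≠ 0)
    (At Bt Ct Ft : ℝ → ℝ) (hAt : Differentiable ℝ At) (hBt : Differentiable ℝ Bt)
    (hCt : Differentiable ℝ Ct) (hFt : Differentiable ℝ Ft)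
    (hAtr : ∀ t, At (lam t) = Real.exp (5 * k₁) * A t / deriv lam t)
    (hBtr : ∀ t, Bt (lam t) = Real.exp (3 * k₁) * B t / deriv lam t)
    (hCtr : ∀ t, Ct (lam t) = Real.exp (3 * k₁ - k₃) * C t / deriv lam t)
    (hFtr : ∀ t, Ft (lam t) = Real.exp (3 * k₁ - k₃) * F t / deriv lam t) :
    ∀ t,
      At (lam t) * (deriv At (lam t) * Ft (lam t) - At (lam t) * deriv Ft (lam t)) ^ 2
          / (Bt (lam t) ^ 5 * Ct (lam t) ^ 2)
        = A t * (deriv A t * F t - A t * deriv F t) ^ 2 / (B t ^ 5 * C t ^ 2) :=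
  J4_first_order_invariant_general k₁ k₃ lam hlam2 hlam' A B C F hA hF At Bt Ct Ft hAt hFt hAtr hBtr
    hCtr hFtr
end

section
/- Let m₁, m₂, m₃, m₄, m₅ be nonzero real constants, let I ⊆ ℝ be an open interval, and let A, B, C, E, F : I → ℝ be differentiable with A(t) ≠ 0, B(t) ≠ 0, C(t) ≠ 0, E(t) ≠ 0, F(t) ≠ 0 for all t ∈ I. Suppose that for all t ∈ I: A(t)E(t)/(B(t)C(t)) = m₁m₄/(m₂m₃), F(t)/C(t) = m₅/m₃, A'(t)B(t) − A(t)B'(t) = 0, and A'(t)C(t) − A(t)C'(t) = 0. Then there exist nonzero constants c₁ and c₂ such that, with G := A, one has for all t ∈ I: B(t) = c₁ G(t), C(t) = (c₂ m₃/m₅) G(t), E(t) = (c₁ c₂ m₁ m₄/(m₂ m₅)) G(t), and F(t) = c₂ G(t); i.e., the equation belongs to the family u_t + G(t)u_{xxxxx} + c₁G(t)u_{xxx} + (c₂m₃/m₅)G(t) u u_{xxx} + (c₁c₂m₁m₄/(m₂m₅))G(t) u u_x + c₂G(t) u_x u_{xx} = 0. -/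
/-!
A vanishing Wronskian `A' B - A B'` makes `B / A` locally constant, hence constant on the
interval: `B = c₁ A` and `C = k A`. The invariant `J₂` gives `F = (m₅ / m₃) C`, so `F = c₂ A`
with `c₂ = m₅ k / m₃`, and the invariant `J₁` expresses `E` as `(m₁ m₄ / (m₂ m₃)) B C / A`.
-/

section Wronskian

variable {𝕜 : Type*} [RCLike 𝕜] {A B : 𝕜 → 𝕜}

theorem deriv_div_eq_zero_of_wronskian_eq_zero {x : 𝕜} (hA : DifferentiableAt 𝕜 A x)
    (hB : DifferentiableAt 𝕜 B x) (hAx : A x ≠ 0)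
    (hW : deriv A x * B x - A x * deriv B x = 0) :
    deriv (fun t => B t / A t) x = 0 := by
  rw [deriv_fun_div hB hA hAx, div_eq_zero_iff]
  left
  linear_combination -hW

theorem IsOpen.div_eq_div_of_wronskian_eq_zero {s : Set 𝕜} (hs : IsOpen s)
    (hs' : IsPreconnected s) (hA : ∀ t ∈ s, DifferentiableAt 𝕜 A t)
    (hB : ∀ t ∈ s, DifferentiableAt 𝕜 B t) (hA0 : ∀ t ∈ s, A t ≠ 0)
    (hW : ∀ t ∈ s, deriv A t * B t - A t * deriv B t = 0) {x y : 𝕜} (hx : x ∈ s) (hy : y ∈ s) :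
    B x / A x = B y / A y :=
  hs.is_const_of_deriv_eq_zero hs'
    (fun t ht => ((hB t ht).div (hA t ht) (hA0 t ht)).differentiableWithinAt)
    (fun t ht => deriv_div_eq_zero_of_wronskian_eq_zero (hA t ht) (hB t ht) (hA0 t ht) (hW t ht))
    hx hy

end Wronskian

theorem general_form_from_invariants_general
    (m₁ m₂ m₃ m₄ m₅ : ℝ)
    (hm₃ : m₃ ≠ 0) (hm₅ : m₅ ≠ 0)
    (a b : ℝ) (I : Set ℝ) (hI : I = Set.Ioo a b)
    (A B C E F : ℝ → ℝ)
    (hA : ∀ t ∈ I, DifferentiableAt ℝ A t) (hB : ∀ t ∈ I, DifferentiableAt ℝ B t)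
    (hC : ∀ t ∈ I, DifferentiableAt ℝ C t)
    (hAne : ∀ t ∈ I, A t ≠ 0) (hBne : ∀ t ∈ I, B t ≠ 0) (hCne : ∀ t ∈ I, C t ≠ 0)
    (hJ1 : ∀ t ∈ I, A t * E t / (B t * C t) = m₁ * m₄ / (m₂ * m₃))
    (hJ2 : ∀ t ∈ I, F t / C t = m₅ / m₃)
    (hW1 : ∀ t ∈ I, deriv A t * B t - A t * deriv B t = 0)
    (hW2 : ∀ t ∈ I, deriv A t * C t - A t * deriv C t = 0) :
    ∃ c₁ c₂ : ℝ, c₁ ≠ 0 ∧ c₂ ≠ 0 ∧ ∀ t ∈ I,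
      B t = c₁ * A t
      ∧ C t = c₂ * m₃ / m₅ * A t
      ∧ E t = c₁ * c₂ * m₁ * m₄ / (m₂ * m₅) * A t
      ∧ F t = c₂ * A t := by
  subst hI
  obtain hI | ⟨t₀, ht₀⟩ := (Set.Ioo a b).eq_empty_or_nonempty
  · exact ⟨1, 1, one_ne_zero, one_ne_zero, by simp [hI]⟩
  have hA₀ := hAne t₀ ht₀
  refine ⟨B t₀ / A t₀, m₅ / m₃ * (C t₀ / A t₀), div_ne_zero (hBne t₀ ht₀) hA₀,
    mul_ne_zero (div_ne_zero hm₅ hm₃) (div_ne_zero (hCne t₀ ht₀) hA₀), fun t ht => ?_⟩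
  have hAt := hAne t ht
  have hBt : B t = B t₀ / A t₀ * A t := by
    rw [← isOpen_Ioo.div_eq_div_of_wronskian_eq_zero isPreconnected_Ioo hA hB hAne hW1 ht ht₀,
      div_mul_cancel₀ _ hAt]
  have hCt : C t = C t₀ / A t₀ * A t := by
    rw [← isOpen_Ioo.div_eq_div_of_wronskian_eq_zero isPreconnected_Ioo hA hC hAne hW2 ht ht₀,
      div_mul_cancel₀ _ hAt]
  have hFt : F t = m₅ / m₃ * C t := (div_eq_iff (hCne t ht)).mp (hJ2 t ht)
  have hEt : A t * E t = m₁ * m₄ / (m₂ * m₃) * (B t * C t) :=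
    (div_eq_iff (mul_ne_zero (hBne t ht) (hCne t ht))).mp (hJ1 t ht)
  refine ⟨hBt, ?_, ?_, ?_⟩
  · rw [hCt]; field_simp
  · apply mul_left_cancel₀ hAt
    rw [hEt, hBt, hCt]; field_simp
  · rw [hFt, hCt]; ring

/-- The most general form of equations of subclass (3) whose differential invariants
take the values of the constant-coefficient equation (17): the coefficients are all
proportional to a single function `G = A`. -/
theorem general_form_from_invariants
    (m₁ m₂ m₃ m₄ m₅ : ℝ)
    (hm₁ : m₁ ≠ 0) (hm₂ : m₂ ≠ 0) (hm₃ : m₃ ≠ 0) (hm₄ : m₄ ≠ 0) (hm₅ : m₅ ≠ 0)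
    (a b : ℝ) (I : Set ℝ) (hI : I = Set.Ioo a b)
    (A B C E F : ℝ → ℝ)
    (hA : ∀ t ∈ I, DifferentiableAt ℝ A t) (hB : ∀ t ∈ I, DifferentiableAt ℝ B t)
    (hC : ∀ t ∈ I, DifferentiableAt ℝ C t) (hE : ∀ t ∈ I, DifferentiableAt ℝ E t)
    (hF : ∀ t ∈ I, DifferentiableAt ℝ F t)
    (hAne : ∀ t ∈ I, A t ≠ 0) (hBne : ∀ t ∈ I, B t ≠ 0) (hCne : ∀ t ∈ I, C t ≠ 0)
    (hEne : ∀ t ∈ I, E t ≠ 0) (hFne : ∀ t ∈ I, F t ≠ 0)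
    (hJ1 : ∀ t ∈ I, A t * E t / (B t * C t) = m₁ * m₄ / (m₂ * m₃))
    (hJ2 : ∀ t ∈ I, F t / C t = m₅ / m₃)
    (hW1 : ∀ t ∈ I, deriv A t * B t - A t * deriv B t = 0)
    (hW2 : ∀ t ∈ I, deriv A t * C t - A t * deriv C t = 0) :
    ∃ c₁ c₂ : ℝ, c₁ ≠ 0 ∧ c₂ ≠ 0 ∧ ∀ t ∈ I,
      B t = c₁ * A t
      ∧ C t = c₂ * m₃ / m₅ * A t
      ∧ E t = c₁ * c₂ * m₁ * m₄ / (m₂ * m₅) * A t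
      ∧ F t = c₂ * A t :=
  general_form_from_invariants_general m₁ m₂ m₃ m₄ m₅ hm₃ hm₅ a b I hI A B C E F hA hB hC hAne hBne
    hCne hJ1 hJ2 hW1 hW2
end

section
/- Let m₁, m₂, m₃, m₄, m₅ be nonzero real constants and c₁, c₂ nonzero real constants with c₁m₁/m₂ > 0, and let k₂ ∈ ℝ. Set b := √(c₁m₁/m₂) and a := c₁b³/m₂. Let G : ℝ → ℝ be continuous with G(t) ≠ 0 for all t, and let 𝒢 : ℝ → ℝ be differentiable with 𝒢'(t) = G(t) for all t. Let w : ℝ × ℝ → ℝ be smooth and satisfy w_t + m₁ w_{xxxxx} + m₂ w_{xxx} + m₃ w w_{xxx} + m₄ w w_x + m₅ w_x w_{xx} = 0 at every point. Then the function ũ(t̃,x̃) := (c₁m₅/(c₂m₂)) · w(a·𝒢(t̃), b·(x̃+k₂)) satisfies, at every point (t̃,x̃): ũ_{t̃} + G(t̃) ũ_{x̃x̃x̃x̃x̃} + c₁G(t̃) ũ_{x̃x̃x̃} + (c₂m₃/m₅)G(t̃) ũ ũ_{x̃x̃x̃} + (c₁c₂m₁m₄/(m₂m₅))G(t̃) ũ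 ũ_{x̃} + c₂G(t̃) ũ_{x̃} ũ_{x̃x̃} = 0. -/
/-- Iterated derivative of `y ↦ C * g (b*(y+k))`. -/
lemma iter_affine (n : ℕ) (g : ℝ → ℝ) (hg : ContDiff ℝ (⊤ : ℕ∞) g) (C b k x : ℝ) :
    iteratedDeriv n (fun y => C * g (b * (y + k))) x
      = C * b ^ n * iteratedDeriv n g (b * (x + k)) := by
  have h2 : iteratedDeriv n (fun z : ℝ => C * g (b * z))
      = fun z => C * (b ^ n * iteratedDeriv n g (b * z)) := by
    have hcomp : ContDiff ℝ (n : ℕ∞) fun z : ℝ => g (b * z) :=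
      (hg.of_le (by exact_mod_cast le_top)).comp (contDiff_const.mul contDiff_id)
    funext z
    rw [show (fun z : ℝ => C * g (b * z)) = fun z => C * (fun y => g (b * y)) z from rfl]
    rw [← iteratedDerivWithin_univ, iteratedDerivWithin_const_mul (Set.mem_univ z)
      uniqueDiffOn_univ C hcomp.contDiffWithinAt, iteratedDerivWithin_univ]
    rw [iteratedDeriv_comp_const_mul (hg.of_le (by exact_mod_cast le_top)) b]
  calc iteratedDeriv n (fun y => C * g (b * (y + k))) x
      = iteratedDeriv n (fun z : ℝ => C * g (b * z)) (x + k) := by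
        rw [show (fun y : ℝ => C * g (b * (y + k)))
          = (fun z : ℝ => C * g (b * z)) ∘ (fun y => y + k) from rfl]
        exact congrFun (iteratedDeriv_comp_add_const n (fun z : ℝ => C * g (b * z)) k) x
    _ = C * b ^ n * iteratedDeriv n g (b * (x + k)) := by rw [h2]; ring

/-- Time derivative of the composite function. -/
lemma deriv_time (w : ℝ × ℝ → ℝ) (hw : ContDiff ℝ (⊤ : ℕ∞) w) (a C q t : ℝ)
    (𝒢 G : ℝ → ℝ) (h𝒢 : Differentiable ℝ 𝒢) (h𝒢' : ∀ t, deriv 𝒢 t = G t) :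
    deriv (fun s => C * w (a * 𝒢 s, q)) t
      = C * (a * G t) * pdt w (a * 𝒢 t) q := by
  have hwd := hw.differentiable (by simp)
  set P : ℝ × ℝ := (a * 𝒢 t, q) with hP
  have h1 : HasDerivAt (fun s => (a * 𝒢 s, q)) (a * G t, (0 : ℝ)) t := by
    have := ((h𝒢 t).hasDerivAt.const_mul a).prodMk (hasDerivAt_const t q)
    rwa [h𝒢'] at this
  have h2 : HasDerivAt (fun s => w (a * 𝒢 s, q)) (fderiv ℝ w P (a * G t, 0)) t :=
    (hwd P).hasFDerivAt.comp_hasDerivAt t h1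
  have h3 : HasDerivAt (fun s => w (s, q)) (fderiv ℝ w P (1, 0)) (a * 𝒢 t) := by
    have hid : HasDerivAt (fun s : ℝ => (s, q)) ((1 : ℝ), (0 : ℝ)) (a * 𝒢 t) :=
      (hasDerivAt_id _).prodMk (hasDerivAt_const _ q)
    exact (hwd P).hasFDerivAt.comp_hasDerivAt (a * 𝒢 t) hid
  have h4 : fderiv ℝ w P (a * G t, 0) = (a * G t) * fderiv ℝ w P (1, 0) := by
    have : ((a * G t, (0:ℝ)) : ℝ × ℝ) = (a * G t) • ((1:ℝ), (0:ℝ)) := by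
      simp [Prod.smul_mk]
    rw [this, map_smul, smul_eq_mul]
  rw [(h2.const_mul C).deriv, h4, pdt, h3.deriv]
  ring

/-- The algebraic identity underlying the transformation. -/
lemma key_alg (m₁ m₂ m₃ m₄ m₅ c₁ c₂ b : ℝ)
    (hm₂ : m₂ ≠ 0) (hm₅ : m₅ ≠ 0) (hc₂ : c₂ ≠ 0)
    (hb2 : b ^ 2 = c₁ * m₁ / m₂) (g wt w1 w2 w3 w5 wv : ℝ) :
    c₁ * m₅ / (c₂ * m₂) * (c₁ * b ^ 3 / m₂ * g) * wt
      + g * (c₁ * m₅ / (c₂ * m₂) * b ^ 5 * w5)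
      + c₁ * g * (c₁ * m₅ / (c₂ * m₂) * b ^ 3 * w3)
      + c₂ * m₃ / m₅ * g * (c₁ * m₅ / (c₂ * m₂) * wv) * (c₁ * m₅ / (c₂ * m₂) * b ^ 3 * w3)
      + c₁ * c₂ * m₁ * m₄ / (m₂ * m₅) * g * (c₁ * m₅ / (c₂ * m₂) * wv)
          * (c₁ * m₅ / (c₂ * m₂) * b ^ 1 * w1)
      + c₂ * g * (c₁ * m₅ / (c₂ * m₂) * b ^ 1 * w1) * (c₁ * m₅ / (c₂ * m₂) * b ^ 2 * w2)
      = c₁ * m₅ / (c₂ * m₂) * (c₁ * b ^ 3 / m₂ * g)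
        * (wt + m₁ * w5 + m₂ * w3 + m₃ * wv * w3 + m₄ * wv * w1 + m₅ * w1 * w2) := by
  have hb3 : b ^ 3 = c₁ * m₁ / m₂ * b := by rw [show b ^ 3 = b ^ 2 * b by ring, hb2]
  have hb5 : b ^ 5 = (c₁ * m₁ / m₂) ^ 2 * b := by
    rw [show b ^ 5 = b ^ 2 * b ^ 2 * b by ring, hb2]; ring
  rw [hb2, hb3, hb5]
  field_simp

/-- The transformation (21) maps solutions of the constant-coefficient equation (17)
to solutions of the variable-coefficient equation (19). -/
theorem transformation_to_variable_coefficients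
    (m₁ m₂ m₃ m₄ m₅ c₁ c₂ : ℝ)
    (hm₁ : m₁ ≠ 0) (hm₂ : m₂ ≠ 0) (hm₃ : m₃ ≠ 0) (hm₄ : m₄ ≠ 0) (hm₅ : m₅ ≠ 0)
    (hc₁ : c₁ ≠ 0) (hc₂ : c₂ ≠ 0) (hpos : c₁ * m₁ / m₂ > 0) (k₂ : ℝ)
    (b a : ℝ) (hb : b = Real.sqrt (c₁ * m₁ / m₂)) (ha : a = c₁ * b ^ 3 / m₂)
    (G : ℝ → ℝ) (hG : Continuous G) (hGne : ∀ t, G t ≠ 0)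
    (𝒢 : ℝ → ℝ) (h𝒢 : Differentiable ℝ 𝒢) (h𝒢' : ∀ t, deriv 𝒢 t = G t)
    (w : ℝ × ℝ → ℝ) (hw : ContDiff ℝ (⊤ : ℕ∞) w)
    (hpde : ∀ t x,
      pdt w t x + m₁ * pdx 5 w t x + m₂ * pdx 3 w t x
        + m₃ * w (t, x) * pdx 3 w t x + m₄ * w (t, x) * pdx 1 w t x
        + m₅ * pdx 1 w t x * pdx 2 w t x = 0)
    (ut : ℝ × ℝ → ℝ)
    (hut : ∀ p : ℝ × ℝ, ut p = c₁ * m₅ / (c₂ * m₂) * w (a * 𝒢 p.1, b * (p.2 + k₂))) :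
    ∀ t x,
      pdt ut t x + G t * pdx 5 ut t x + c₁ * G t * pdx 3 ut t x
        + c₂ * m₃ / m₅ * G t * ut (t, x) * pdx 3 ut t x
        + c₁ * c₂ * m₁ * m₄ / (m₂ * m₅) * G t * ut (t, x) * pdx 1 ut t x
        + c₂ * G t * pdx 1 ut t x * pdx 2 ut t x = 0 := by
  intro t x
  have hA : ∃ A : ℝ, A = a * 𝒢 t := ⟨_, rfl⟩
  obtain ⟨A, hA⟩ := hA
  have hB : ∃ B : ℝ, B = b * (x + k₂) := ⟨_, rfl⟩
  obtain ⟨B, hB⟩ := hB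
  have hg : ContDiff ℝ (⊤ : ℕ∞) (fun z : ℝ => w (A, z)) :=
    hw.comp (ContDiff.prodMk contDiff_const contDiff_id)
  have hpdx : ∀ n : ℕ, pdx n ut t x = c₁ * m₅ / (c₂ * m₂) * b ^ n * pdx n w A B := by
    intro n
    have hfun : (fun y => ut (t, y))
        = fun y => c₁ * m₅ / (c₂ * m₂) * (fun z => w (A, z)) (b * (y + k₂)) := by
      funext y; rw [hut (t, y), hA]
    rw [pdx, hfun, iter_affine n _ hg _ b k₂ x, pdx, hB]
  have hpdt : pdt ut t x = c₁ * m₅ / (c₂ * m₂) * (a * G t) * pdt w A B := by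
    have hfun : (fun s => ut (s, x)) = fun s => c₁ * m₅ / (c₂ * m₂) * w (a * 𝒢 s, B) := by
      funext s; rw [hut (s, x), hB]
    rw [pdt, hfun, deriv_time w hw a _ B t 𝒢 G h𝒢 h𝒢', hA]
  have hval : ut (t, x) = c₁ * m₅ / (c₂ * m₂) * w (A, B) := by
    rw [hut (t, x), hA, hB]
  have hb2 : b ^ 2 = c₁ * m₁ / m₂ := by rw [hb]; exact Real.sq_sqrt hpos.le
  rw [hpdt, hpdx 5, hpdx 3, hpdx 1, hpdx 2, hval, ha,
    key_alg m₁ m₂ m₃ m₄ m₅ c₁ c₂ b hm₂ hm₅ hc₂ hb2 (G t) (pdt w A B)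
      (pdx 1 w A B) (pdx 2 w A B) (pdx 3 w A B) (pdx 5 w A B) (w (A, B)),
    hpde A B, mul_zero]
end

section
/- Let m₁, m₂, m₃, m₄, m₅ be nonzero real constants and c₁ a nonzero real constant with c₁m₁/m₂ > 0, and let k₂ ∈ ℝ. Set b := √(c₁m₁/m₂) and a := c₁b³/m₂. Let G : ℝ → ℝ be differentiable with G(t) ≠ 0 for all t, let H : ℝ → ℝ be differentiable with H(t) ≠ 0 for all t, and let 𝒢 : ℝ → ℝ be differentiable with 𝒢'(t) = G(t) for all t. Let w : ℝ × ℝ → ℝ be smooth and satisfy w_t + m₁ w_{xxxxx} + m₂ w_{xxx} + m₃ w w_{xxx} + m₄ w w_x + m₅ w_x w_{xx} = 0 at every point. Then the function ũ(t̃,x̃) := (c₁m₃G(t̃)/(m₂H(t̃))) · w(a·𝒢(t̃), b·(x̃+k₂)) satisfies, at every point (t̃,x̃): ũ_{t̃} + G(t̃) ũ_{x̃x̃x̃x̃x̃} + c₁G(t̃) ũ_{x̃x̃x̃} + H(t̃) ũ ũ_{x̃x̃x̃} + (c₁m₁m₄/(m₂m₃))H(t̃) ũ ũ_{x̃} + (m₅/m₃)H(t̃)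 ũ_{x̃} ũ_{x̃x̃} + ((G(t̃)H'(t̃) − G'(t̃)H(t̃))/(G(t̃)H(t̃))) ũ = 0. -/
lemma iter_aff (n : ℕ) : ∀ (f : ℝ → ℝ), ContDiff ℝ (⊤:ℕ∞) f → ∀ (c b d x : ℝ),
    iteratedDeriv n (fun y => c * f (b * y + d)) x
      = c * b ^ n * iteratedDeriv n f (b * x + d) := by
  induction n with
  | zero => intro f hf c b d x; simp
  | succ n ih =>
    intro f hf c b d x
    rw [iteratedDeriv_succ', iteratedDeriv_succ']
    have hfd : Differentiable ℝ f := hf.differentiable (by simp)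
    have hstep : (deriv fun y => c * f (b * y + d))
        = fun y => (c * b) * deriv f (b * y + d) := by
      funext y
      have h1 : HasDerivAt (fun z => b * z + d) b y := by
        simpa using ((hasDerivAt_id y).const_mul b).add_const d
      have h2 : HasDerivAt f (deriv f (b * y + d)) (b * y + d) := (hfd _).hasDerivAt
      have h3 : HasDerivAt (fun z => c * f (b * z + d)) (c * (deriv f (b * y + d) * b)) y :=
        (h2.comp y h1).const_mul c
      rw [h3.deriv]; ring
    rw [hstep, ih (deriv f) (contDiff_infty_iff_deriv.mp hf).2 (c * b) b d x]
    ring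

set_option maxHeartbeats 1000000 in
/-- The composite transformation (28) maps solutions of the constant-coefficient
equation (17) to solutions of the damped variable-coefficient equation (27). -/
theorem transformation_to_damped_equation
    (m₁ m₂ m₃ m₄ m₅ c₁ : ℝ)
    (hm₁ : m₁ ≠ 0) (hm₂ : m₂ ≠ 0) (hm₃ : m₃ ≠ 0) (hm₄ : m₄ ≠ 0) (hm₅ : m₅ ≠ 0)
    (hc₁ : c₁ ≠ 0) (hpos : c₁ * m₁ / m₂ > 0) (k₂ : ℝ)
    (b a : ℝ) (hb : b = Real.sqrt (c₁ * m₁ / m₂)) (ha : a = c₁ * b ^ 3 / m₂)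
    (G : ℝ → ℝ) (hG : Differentiable ℝ G) (hGne : ∀ t, G t ≠ 0)
    (H : ℝ → ℝ) (hH : Differentiable ℝ H) (hHne : ∀ t, H t ≠ 0)
    (𝒢 : ℝ → ℝ) (h𝒢 : Differentiable ℝ 𝒢) (h𝒢' : ∀ t, deriv 𝒢 t = G t)
    (w : ℝ × ℝ → ℝ) (hw : ContDiff ℝ (⊤ : ℕ∞) w)
    (hpde : ∀ t x,
      pdt w t x + m₁ * pdx 5 w t x + m₂ * pdx 3 w t x
        + m₃ * w (t, x) * pdx 3 w t x + m₄ * w (t, x) * pdx 1 w t x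
        + m₅ * pdx 1 w t x * pdx 2 w t x = 0)
    (ut : ℝ × ℝ → ℝ)
    (hut : ∀ p : ℝ × ℝ,
      ut p = c₁ * m₃ * G p.1 / (m₂ * H p.1) * w (a * 𝒢 p.1, b * (p.2 + k₂))) :
    ∀ t x,
      pdt ut t x + G t * pdx 5 ut t x + c₁ * G t * pdx 3 ut t x
        + H t * ut (t, x) * pdx 3 ut t x
        + c₁ * m₁ * m₄ / (m₂ * m₃) * H t * ut (t, x) * pdx 1 ut t x
        + m₅ / m₃ * H t * pdx 1 ut t x * pdx 2 ut t x
        + (G t * deriv H t - deriv G t * H t) / (G t * H t) * ut (t, x) = 0 := by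
  intro t x
  have hbne : b ≠ 0 := by
    rw [hb]; exact (Real.sqrt_pos.mpr hpos).ne'
  have hb2 : b ^ 2 = c₁ * m₁ / m₂ := by
    rw [hb]; exact Real.sq_sqrt hpos.le
  have hm1 : m₁ = b ^ 2 * m₂ / c₁ := by
    rw [hb2]; field_simp
  have hwd : Differentiable ℝ w := hw.differentiable (by simp)
  -- x-derivatives
  have hpdx : ∀ n : ℕ, pdx n ut t x
      = c₁ * m₃ * G t / (m₂ * H t) * b ^ n * pdx n w (a * 𝒢 t) (b * (x + k₂)) := by
    intro n
    have hf : ContDiff ℝ (⊤:ℕ∞) (fun y => w (a * 𝒢 t, y)) :=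
      (hw.of_le (by simp)).comp (ContDiff.prodMk contDiff_const contDiff_id)
    have heq : (fun y => ut (t, y))
        = fun y => c₁ * m₃ * G t / (m₂ * H t) * (fun y => w (a * 𝒢 t, y)) (b * y + b * k₂) := by
      funext y
      rw [hut (t, y)]
      have : b * (y + k₂) = b * y + b * k₂ := by ring
      simp only [this]
    have hY2 : b * x + b * k₂ = b * (x + k₂) := by ring
    rw [pdx, heq, iter_aff n _ hf, hY2, pdx]
  -- t-derivative
  have hCd : HasDerivAt (fun s => c₁ * m₃ * G s / (m₂ * H s))
      ((c₁ * m₃ * deriv G t * (m₂ * H t) - c₁ * m₃ * G t * (m₂ * deriv H t)) / (m₂ * H t) ^ 2)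
      t :=
    HasDerivAt.div ((hG t).hasDerivAt.const_mul (c₁ * m₃))
      ((hH t).hasDerivAt.const_mul m₂) (mul_ne_zero hm₂ (hHne t))
  have hfw : HasFDerivAt w (fderiv ℝ w (a * 𝒢 t, b * (x + k₂))) (a * 𝒢 t, b * (x + k₂)) :=
    (hwd (a * 𝒢 t, b * (x + k₂))).hasFDerivAt
  have hptw : pdt w (a * 𝒢 t) (b * (x + k₂))
      = fderiv ℝ w (a * 𝒢 t, b * (x + k₂)) (1, 0) := by
    have hin : HasDerivAt (fun s : ℝ => (s, b * (x + k₂))) ((1 : ℝ), (0 : ℝ)) (a * 𝒢 t) :=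
      HasDerivAt.prodMk (hasDerivAt_id _) (hasDerivAt_const _ _)
    exact (hfw.comp_hasDerivAt (a * 𝒢 t) hin).deriv
  have hWt : HasDerivAt (fun s => w (a * 𝒢 s, b * (x + k₂)))
      (a * G t * pdt w (a * 𝒢 t) (b * (x + k₂))) t := by
    have hin : HasDerivAt (fun s : ℝ => (a * 𝒢 s, b * (x + k₂))) ((a * G t, (0 : ℝ))) t := by
      have := HasDerivAt.prodMk ((h𝒢 t).hasDerivAt.const_mul a) (hasDerivAt_const t (b * (x + k₂)))
      rwa [h𝒢' t] at this
    have hcomp := hfw.comp_hasDerivAt t hin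
    have hsm : ((a * G t, (0 : ℝ)) : ℝ × ℝ) = (a * G t) • ((1 : ℝ), (0 : ℝ)) := by simp
    rw [hsm, (fderiv ℝ w (a * 𝒢 t, b * (x + k₂))).map_smul, ← hptw] at hcomp
    simp only [smul_eq_mul] at hcomp
    exact hcomp
  have hpdt : pdt ut t x
      = (c₁ * m₃ * deriv G t * (m₂ * H t) - c₁ * m₃ * G t * (m₂ * deriv H t)) / (m₂ * H t) ^ 2
          * w (a * 𝒢 t, b * (x + k₂))
        + c₁ * m₃ * G t / (m₂ * H t)
            * (a * G t * pdt w (a * 𝒢 t) (b * (x + k₂))) := by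
    have heq : (fun s => ut (s, x))
        = fun s => (c₁ * m₃ * G s / (m₂ * H s)) * w (a * 𝒢 s, b * (x + k₂)) := by
      funext s
      rw [hut (s, x)]
    rw [pdt, heq]
    exact (hCd.mul hWt).deriv
  have hE := hpde (a * 𝒢 t) (b * (x + k₂))
  have hWteq : pdt w (a * 𝒢 t) (b * (x + k₂))
      = -(m₁ * pdx 5 w (a * 𝒢 t) (b * (x + k₂)) + m₂ * pdx 3 w (a * 𝒢 t) (b * (x + k₂))
      + m₃ * w (a * 𝒢 t, b * (x + k₂)) * pdx 3 w (a * 𝒢 t) (b * (x + k₂))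
      + m₄ * w (a * 𝒢 t, b * (x + k₂)) * pdx 1 w (a * 𝒢 t) (b * (x + k₂))
      + m₅ * pdx 1 w (a * 𝒢 t) (b * (x + k₂)) * pdx 2 w (a * 𝒢 t) (b * (x + k₂))) := by
    linarith
  rw [hpdt, hpdx 5, hpdx 3, hpdx 1, hpdx 2, hut (t, x), hWteq, hm1]
  generalize w (a * 𝒢 t, b * (x + k₂)) = W
  generalize pdx 1 w (a * 𝒢 t) (b * (x + k₂)) = P1
  generalize pdx 2 w (a * 𝒢 t) (b * (x + k₂)) = P2
  generalize pdx 3 w (a * 𝒢 t) (b * (x + k₂)) = P3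
  generalize pdx 5 w (a * 𝒢 t) (b * (x + k₂)) = P5
  subst ha
  have hGt : G t ≠ 0 := hGne t
  have hHt : H t ≠ 0 := hHne t
  field_simp
  ring
end

section
/- Let m₁, m₂, m₃, m₄, m₅, c₂ be real constants with m₃ + m₅ ≠ 0 and m₄/(m₃+m₅) ≤ 0. Set k := √(−m₄/(m₃+m₅)) and a := m₄(m₁m₄ − m₂m₅ − m₂m₃)/(m₃+m₅)². Then the function u(t,x) := c₂ · exp(k(x − at)) = c₂ · exp(k(x + m₄(m₂m₅ + m₂m₃ − m₁m₄)t/(m₃+m₅)²)) satisfies u_t + m₁ u_{xxxxx} + m₂ u_{xxx} + m₃ u u_{xxx} + m₄ u u_x + m₅ u_x u_{xx} = 0 at every point (t,x). -/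
lemma exp_itd : ∀ (n : ℕ) (c k b x : ℝ),
    iteratedDeriv n (fun y => c * Real.exp (k * (y - b))) x
      = k ^ n * (c * Real.exp (k * (x - b))) := by
  intro n
  induction n with
  | zero => intro c k b x; simp
  | succ n ih =>
    intro c k b x
    rw [iteratedDeriv_succ']
    have hd : deriv (fun y => c * Real.exp (k * (y - b)))
        = fun y => (c * k) * Real.exp (k * (y - b)) := by
      funext y
      have h : HasDerivAt (fun y => c * Real.exp (k * (y - b)))
          (c * (Real.exp (k * (y - b)) * (k * 1))) y :=
        ((((hasDerivAt_id y).sub_const b).const_mul k).exp).const_mul c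
      rw [h.deriv]; ring
    rw [hd, ih]; ring

lemma exp_pdt (c k a x t : ℝ) :
    deriv (fun s => c * Real.exp (k * (x - a * s))) t
      = (-(k * a)) * (c * Real.exp (k * (x - a * t))) := by
  have h : HasDerivAt (fun s => c * Real.exp (k * (x - a * s)))
      (c * (Real.exp (k * (x - a * t)) * (k * (0 - a * 1)))) t :=
    ((((hasDerivAt_const t x).sub ((hasDerivAt_id t).const_mul a)).const_mul k).exp).const_mul c
  rw [h.deriv]; ring

/-- The exponential travelling wave solution of the constant-coefficient
fifth-order KdV equation (17). -/
theorem exponential_solution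
    (m₁ m₂ m₃ m₄ m₅ c₂ : ℝ) (hne : m₃ + m₅ ≠ 0) (hsign : m₄ / (m₃ + m₅) ≤ 0)
    (k a : ℝ) (hk : k = Real.sqrt (-m₄ / (m₃ + m₅)))
    (ha : a = m₄ * (m₁ * m₄ - m₂ * m₅ - m₂ * m₃) / (m₃ + m₅) ^ 2)
    (u : ℝ × ℝ → ℝ)
    (hu : ∀ p : ℝ × ℝ, u p = c₂ * Real.exp (k * (p.2 - a * p.1))) :
    ∀ t x,
      pdt u t x + m₁ * pdx 5 u t x + m₂ * pdx 3 u t x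
        + m₃ * u (t, x) * pdx 3 u t x + m₄ * u (t, x) * pdx 1 u t x
        + m₅ * pdx 1 u t x * pdx 2 u t x = 0 := by
  intro t x
  have hx : (fun y => u (t, y)) = fun y => c₂ * Real.exp (k * (y - a * t)) := by
    funext y; exact hu (t, y)
  have ht : (fun s => u (s, x)) = fun s => c₂ * Real.exp (k * (x - a * s)) := by
    funext s; exact hu (s, x)
  have hk2 : k ^ 2 * (m₃ + m₅) = -m₄ := by
    have hnn : 0 ≤ -m₄ / (m₃ + m₅) := by
      rw [neg_div]
      exact neg_nonneg.mpr hsign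
    have : k ^ 2 = -m₄ / (m₃ + m₅) := by
      rw [hk, sq, Real.mul_self_sqrt hnn]
    rw [this]; field_simp
  have ha' : a * (m₃ + m₅) ^ 2 = m₄ * (m₁ * m₄ - m₂ * m₅ - m₂ * m₃) := by
    rw [ha]; field_simp
  set E := c₂ * Real.exp (k * (x - a * t)) with hE
  have h1 : pdx 1 u t x = k ^ 1 * E := by rw [pdx, hx, exp_itd]
  have h2 : pdx 2 u t x = k ^ 2 * E := by rw [pdx, hx, exp_itd]
  have h3 : pdx 3 u t x = k ^ 3 * E := by rw [pdx, hx, exp_itd]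
  have h5 : pdx 5 u t x = k ^ 5 * E := by rw [pdx, hx, exp_itd]
  have h0 : u (t, x) = E := hu (t, x)
  have hpt : pdt u t x = (-(k * a)) * E := by rw [pdt, ht, exp_pdt]
  rw [h1, h2, h3, h5, h0, hpt]
  have key : (m₃ + m₅) ^ 2 *
      ((-(k * a)) * E + m₁ * (k ^ 5 * E) + m₂ * (k ^ 3 * E)
        + m₃ * E * (k ^ 3 * E) + m₄ * E * (k ^ 1 * E)
        + m₅ * (k ^ 1 * E) * (k ^ 2 * E)) = 0 := by
    linear_combination (E * k * (m₁ * (k ^ 2 * (m₃ + m₅) - m₄) + m₂ * (m₃ + m₅))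
        + E ^ 2 * k * (m₃ + m₅) ^ 2) * hk2 + (-(E * k)) * ha'
  have hs : (m₃ + m₅) ^ 2 ≠ 0 := pow_ne_zero 2 hne
  exact (mul_eq_zero.mp key).resolve_left hs
end

section
/- Let a, m₄, m₅ be real constants and set m₁ := (−3a + 2m₄ − 2m₅)/72, m₂ := (−30a + 17m₄ − 8m₅)/36, m₃ := (15a − 10m₄ + 4m₅)/12. Then the kink-type function u(t,x) := tanh²(x − at) satisfies u_t + m₁ u_{xxxxx} + m₂ u_{xxx} + m₃ u u_{xxx} + m₄ u u_x + m₅ u_x u_{xx} = 0 at every point (t,x). -/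
open Polynomial Real

theorem Real.hasDerivAt_tanh (x : ℝ) : HasDerivAt tanh (1 - tanh x ^ 2) x := by
  have hcosh : cosh x ≠ 0 := (cosh_pos x).ne'
  have h := (hasDerivAt_sinh x).div (hasDerivAt_cosh x) hcosh
  have hquot : sinh / cosh = tanh := funext fun y => (tanh_eq_sinh_div_cosh y).symm
  rw [hquot] at h
  refine h.congr_deriv ?_
  rw [tanh_eq_sinh_div_cosh]
  field_simp

section TravellingWave

variable {f : ℝ → ℝ} {a : ℝ} {u : ℝ × ℝ → ℝ}

theorem pdx_of_travellingWave (hu : ∀ p : ℝ × ℝ, u p = f (p.2 - a * p.1)) (n : ℕ) (t x : ℝ) :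
    pdx n u t x = iteratedDeriv n f (x - a * t) := by
  simp only [pdx, hu, iteratedDeriv_comp_sub_const]

theorem pdt_of_travellingWave (hu : ∀ p : ℝ × ℝ, u p = f (p.2 - a * p.1)) {t x : ℝ}
    (hf : DifferentiableAt ℝ f (x - a * t)) :
    pdt u t x = -a * deriv f (x - a * t) := by
  have hphase : HasDerivAt (fun s => x - a * s) (-a) t := by
    simpa using ((hasDerivAt_id t).const_mul a).const_sub x
  simp only [pdt, hu]
  exact (hf.hasDerivAt.comp t hphase).deriv.trans (mul_comm _ _)

end TravellingWave

/-- The chain rule for `p(T)` along a solution `T` of the Riccati equation `T' = 1 - T²`. -/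
noncomputable def riccatiDeriv (p : ℝ[X]) : ℝ[X] := derivative p * (1 - X ^ 2)

theorem hasDerivAt_eval_tanh (p : ℝ[X]) (x : ℝ) :
    HasDerivAt (fun y => p.eval (tanh y)) ((riccatiDeriv p).eval (tanh x)) x := by
  rw [riccatiDeriv, eval_mul, eval_sub, eval_one, eval_pow, eval_X]
  exact (p.hasDerivAt (tanh x)).comp x (hasDerivAt_tanh x)

theorem iteratedDeriv_eval_tanh (n : ℕ) (p : ℝ[X]) :
    iteratedDeriv n (fun y => p.eval (tanh y)) = fun y => (riccatiDeriv^[n] p).eval (tanh y) := by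
  induction n generalizing p with
  | zero => rfl
  | succ n ih =>
    rw [iteratedDeriv_succ', funext fun x => (hasDerivAt_eval_tanh p x).deriv, ih,
      Function.iterate_succ_apply]

/-- The kink-type solution `u = tanh²(x − at)` of the constant-coefficient
fifth-order KdV equation (17). -/
theorem kink_solution
    (a m₄ m₅ : ℝ)
    (m₁ m₂ m₃ : ℝ)
    (hm₁ : m₁ = (-3 * a + 2 * m₄ - 2 * m₅) / 72)
    (hm₂ : m₂ = (-30 * a + 17 * m₄ - 8 * m₅) / 36)
    (hm₃ : m₃ = (15 * a - 10 * m₄ + 4 * m₅) / 12)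
    (u : ℝ × ℝ → ℝ)
    (hu : ∀ p : ℝ × ℝ, u p = Real.tanh (p.2 - a * p.1) ^ 2) :
    ∀ t x,
      pdt u t x + m₁ * pdx 5 u t x + m₂ * pdx 3 u t x
        + m₃ * u (t, x) * pdx 3 u t x + m₄ * u (t, x) * pdx 1 u t x
        + m₅ * pdx 1 u t x * pdx 2 u t x = 0 := by
  intro t x
  set profile : ℝ → ℝ := fun ξ => (X ^ 2 : ℝ[X]).eval (tanh ξ)
  have hwave : ∀ p : ℝ × ℝ, u p = profile (p.2 - a * p.1) := by simp [profile, hu]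
  rw [pdt_of_travellingWave hwave (hasDerivAt_eval_tanh _ _).differentiableAt,
    ← iteratedDeriv_one]
  simp only [pdx_of_travellingWave hwave, hwave, profile, iteratedDeriv_eval_tanh]
  simp only [Function.iterate_succ_apply', Function.iterate_zero_apply]
  simp only [riccatiDeriv, derivative_mul, derivative_sub, derivative_add,
    derivative_one, derivative_X_pow, derivative_C, eval_mul, eval_sub, eval_add, eval_one,
    eval_pow, eval_X, eval_C, eval_zero]
  subst hm₁ hm₂ hm₃
  norm_num
  ring
end

section
/- Let a, m₄, m₅ be real constants and set m₁ := (−3a + m₄ + 2m₅)/72, m₂ := (15a − 2m₄ − 4m₅)/36, m₃ := (−15a + 5m₄ + 4m₅)/12. Then the soliton function u(t,x) := sech²(x − at) = 1/cosh²(x − at) satisfies u_t + m₁ u_{xxxxx} + m₂ u_{xxx} + m₃ u u_{xxx} + m₄ u u_x + m₅ u_x u_{xx} = 0 at every point (t,x). -/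
open Real

lemma pdx_of_travelling_wave {g : ℝ → ℝ} {u : ℝ × ℝ → ℝ} {a : ℝ}
    (hu : ∀ p : ℝ × ℝ, u p = g (p.2 - a * p.1)) (n : ℕ) (t x : ℝ) :
    pdx n u t x = iteratedDeriv n g (x - a * t) := by
  simp only [pdx, hu, iteratedDeriv_comp_sub_const]

lemma pdt_of_travelling_wave {g : ℝ → ℝ} {u : ℝ × ℝ → ℝ} {a g' t x : ℝ}
    (hu : ∀ p : ℝ × ℝ, u p = g (p.2 - a * p.1)) (hg : HasDerivAt g g' (x - a * t)) :
    pdt u t x = -a * g' := by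
  have hξ : HasDerivAt (fun s : ℝ => x - a * s) (-a) t := by
    simpa using ((hasDerivAt_id t).const_mul a).const_sub x
  simp only [pdt, hu]
  exact (hg.comp t hξ).deriv.trans (mul_comm _ _)

section StationaryEquation

variable {f f' : ℝ → ℝ} {c₁ c₂ : ℝ}
  (hf : ∀ z, HasDerivAt f (f' z) z) (hf' : ∀ z, HasDerivAt f' (c₁ * f z + c₂ * f z ^ 2) z)

include hf in
lemma iteratedDeriv_one_of_hasDerivAt : iteratedDeriv 1 f = f' := by
  rw [iteratedDeriv_one]
  exact funext fun z => (hf z).deriv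

include hf hf' in
lemma iteratedDeriv_two_of_stationary :
    iteratedDeriv 2 f = fun z => c₁ * f z + c₂ * f z ^ 2 := by
  rw [iteratedDeriv_succ, iteratedDeriv_one_of_hasDerivAt hf]
  exact funext fun z => (hf' z).deriv

include hf hf' in
lemma iteratedDeriv_three_of_stationary :
    iteratedDeriv 3 f = fun z => (c₁ + 2 * c₂ * f z) * f' z := by
  rw [iteratedDeriv_succ, iteratedDeriv_two_of_stationary hf hf']
  refine funext fun z => HasDerivAt.deriv ?_
  exact (((hf z).const_mul c₁).add (((hf z).pow 2).const_mul c₂)).congr_deriv (by ring)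

include hf hf' in
lemma iteratedDeriv_four_of_stationary :
    iteratedDeriv 4 f = fun z =>
      2 * c₂ * f' z ^ 2 + (c₁ + 2 * c₂ * f z) * (c₁ * f z + c₂ * f z ^ 2) := by
  rw [iteratedDeriv_succ, iteratedDeriv_three_of_stationary hf hf']
  refine funext fun z => HasDerivAt.deriv ?_
  exact ((((hf z).const_mul (2 * c₂)).const_add c₁).mul (hf' z)).congr_deriv (by ring)

include hf hf' in
lemma iteratedDeriv_five_of_stationary :
    iteratedDeriv 5 f = fun z =>
      ((c₁ + 2 * c₂ * f z) ^ 2 + 6 * c₂ * (c₁ * f z + c₂ * f z ^ 2)) * f' z := by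
  rw [iteratedDeriv_succ, iteratedDeriv_four_of_stationary hf hf']
  refine funext fun z => HasDerivAt.deriv ?_
  have hsq := ((hf' z).pow 2).const_mul (2 * c₂)
  have hrhs : HasDerivAt (fun z => c₁ * f z + c₂ * f z ^ 2)
      (c₁ * f' z + c₂ * (2 * f z * f' z)) z :=
    ((hf z).const_mul c₁).add (((hf z).pow 2).const_mul c₂) |>.congr_deriv (by ring)
  have hprod := (((hf z).const_mul (2 * c₂)).const_add c₁).mul hrhs
  exact (hsq.add hprod).congr_deriv (by ring)

end StationaryEquation

lemma hasDerivAt_sech_sq (z : ℝ) :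
    HasDerivAt (fun z => (1 / cosh z) ^ 2) (-2 * sinh z / cosh z ^ 3) z := by
  have hc : cosh z ≠ 0 := (cosh_pos z).ne'
  refine (((hasDerivAt_const z 1).div (hasDerivAt_cosh z) hc).pow 2).congr_deriv ?_
  simp only [Pi.div_apply, Nat.cast_ofNat, Nat.add_one_sub_one, pow_one]
  field_simp
  ring

lemma hasDerivAt_deriv_sech_sq (z : ℝ) :
    HasDerivAt (fun z => -2 * sinh z / cosh z ^ 3)
      (4 * (1 / cosh z) ^ 2 + -6 * ((1 / cosh z) ^ 2) ^ 2) z := by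
  have hc : cosh z ≠ 0 := (cosh_pos z).ne'
  refine (((hasDerivAt_sinh z).const_mul (-2)).div ((hasDerivAt_cosh z).pow 3)
    (pow_ne_zero 3 hc)).congr_deriv ?_
  simp only [Pi.pow_apply]
  field_simp
  rw [sinh_sq]
  ring

/-- The soliton solution `u = sech²(x − at)` of the constant-coefficient
fifth-order KdV equation (17). -/
theorem soliton_solution
    (a m₄ m₅ : ℝ)
    (m₁ m₂ m₃ : ℝ)
    (hm₁ : m₁ = (-3 * a + m₄ + 2 * m₅) / 72)
    (hm₂ : m₂ = (15 * a - 2 * m₄ - 4 * m₅) / 36)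
    (hm₃ : m₃ = (-15 * a + 5 * m₄ + 4 * m₅) / 12)
    (u : ℝ × ℝ → ℝ)
    (hu : ∀ p : ℝ × ℝ, u p = (1 / Real.cosh (p.2 - a * p.1)) ^ 2) :
    ∀ t x,
      pdt u t x + m₁ * pdx 5 u t x + m₂ * pdx 3 u t x
        + m₃ * u (t, x) * pdx 3 u t x + m₄ * u (t, x) * pdx 1 u t x
        + m₅ * pdx 1 u t x * pdx 2 u t x = 0 := by
  intro t x
  set f : ℝ → ℝ := fun z => (1 / cosh z) ^ 2
  have hu' : ∀ p : ℝ × ℝ, u p = f (p.2 - a * p.1) := hu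
  have hf : ∀ z, HasDerivAt f _ z := hasDerivAt_sech_sq
  have hf' := hasDerivAt_deriv_sech_sq
  simp only [pdt_of_travelling_wave hu' (hf _), pdx_of_travelling_wave hu',
    iteratedDeriv_one_of_hasDerivAt hf, iteratedDeriv_two_of_stationary hf hf',
    iteratedDeriv_three_of_stationary hf hf', iteratedDeriv_five_of_stationary hf hf', hu']
  subst hm₁ hm₂ hm₃
  ring
end

section
/- Let a ≠ 0 and m₅ be real constants and set m₁ := −1/(64a⁴), m₂ := −5/(16a²), m₃ := −2m₅, m₄ := −16a²m₅. Then the compacton-type function u(t,x) := cos⁴(a(x − t)) satisfies u_t + m₁ u_{xxxxx} + m₂ u_{xxx} + m₃ u u_{xxx} + m₄ u u_x + m₅ u_x u_{xx} = 0 at every point (t,x). -/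
open Real

section TravellingWave

variable {f : ℝ → ℝ} {u : ℝ × ℝ → ℝ}

theorem pdt_eq_of_travelling_wave (hu : ∀ p : ℝ × ℝ, u p = f (p.2 - p.1)) (t x : ℝ) :
    pdt u t x = -deriv f (x - t) := by
  simp only [pdt, hu, deriv_comp_const_sub]

theorem pdx_eq_of_travelling_wave (hu : ∀ p : ℝ × ℝ, u p = f (p.2 - p.1)) (n : ℕ) (t x : ℝ) :
    pdx n u t x = iteratedDeriv n f (x - t) := by
  simp only [pdx, hu, iteratedDeriv_comp_sub_const]

end TravellingWave

theorem cos_pow_four (θ : ℝ) : cos θ ^ 4 = 3 / 8 + (cos (2 * θ) / 2 + cos (4 * θ) / 8) := by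
  rw [show 4 * θ = 2 * (2 * θ) by ring, cos_two_mul (2 * θ), cos_two_mul θ]
  ring

theorem iteratedDeriv_cos_mul_pow_four (a : ℝ) {n : ℕ} (hn : 0 < n) (ξ : ℝ) :
    iteratedDeriv n (fun ξ => cos (a * ξ) ^ 4) ξ
      = (2 * a) ^ n * iteratedDeriv n cos (2 * a * ξ) / 2
        + (4 * a) ^ n * iteratedDeriv n cos (4 * a * ξ) / 8 := by
  simp_rw [cos_pow_four, ← mul_assoc]
  rw [iteratedDeriv_const_add hn, iteratedDeriv_fun_add, iteratedDeriv_div_const,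
    iteratedDeriv_div_const, iteratedDeriv_comp_const_mul contDiff_cos,
    iteratedDeriv_comp_const_mul contDiff_cos]
  all_goals fun_prop

theorem cos_mul_pow_four_ode {a : ℝ} (ha : a ≠ 0) {f : ℝ → ℝ} (hf : ∀ ξ, f ξ = cos (a * ξ) ^ 4)
    (m₅ ξ : ℝ) :
    -iteratedDeriv 1 f ξ - 1 / (64 * a ^ 4) * iteratedDeriv 5 f ξ
      - 5 / (16 * a ^ 2) * iteratedDeriv 3 f ξ - 2 * m₅ * f ξ * iteratedDeriv 3 f ξ
      - 16 * a ^ 2 * m₅ * f ξ * iteratedDeriv 1 f ξ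
      + m₅ * iteratedDeriv 1 f ξ * iteratedDeriv 2 f ξ = 0 := by
  obtain rfl : f = fun ξ => cos (a * ξ) ^ 4 := funext hf
  simp only [iteratedDeriv_cos_mul_pow_four a (Nat.succ_pos _), cos_pow_four (a * ξ),
    iteratedDeriv_add_one_cos, iteratedDeriv_add_one_sin, iteratedDeriv_one, deriv_cos',
    Real.deriv_sin, Pi.neg_apply, neg_neg]
  rw [show 2 * a * ξ = 2 * (a * ξ) by ring, show 4 * a * ξ = 2 * (2 * (a * ξ)) by ring,
    show 4 * (a * ξ) = 2 * (2 * (a * ξ)) by ring, sin_two_mul (2 * (a * ξ)),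
    cos_two_mul (2 * (a * ξ))]
  field_simp
  ring

/-- The compacton-type solution `u = cos⁴(a(x − t))` of the constant-coefficient
fifth-order KdV equation (17). -/
theorem compacton_solution
    (a m₅ : ℝ) (ha : a ≠ 0)
    (m₁ m₂ m₃ m₄ : ℝ)
    (hm₁ : m₁ = -1 / (64 * a ^ 4))
    (hm₂ : m₂ = -5 / (16 * a ^ 2))
    (hm₃ : m₃ = -2 * m₅)
    (hm₄ : m₄ = -16 * a ^ 2 * m₅)
    (u : ℝ × ℝ → ℝ)
    (hu : ∀ p : ℝ × ℝ, u p = Real.cos (a * (p.2 - p.1)) ^ 4) :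
    ∀ t x,
      pdt u t x + m₁ * pdx 5 u t x + m₂ * pdx 3 u t x
        + m₃ * u (t, x) * pdx 3 u t x + m₄ * u (t, x) * pdx 1 u t x
        + m₅ * pdx 1 u t x * pdx 2 u t x = 0 := by
  intro t x
  set f : ℝ → ℝ := fun ξ => cos (a * ξ) ^ 4
  rw [pdt_eq_of_travelling_wave (f := f) hu, ← iteratedDeriv_one]
  simp only [pdx_eq_of_travelling_wave (f := f) hu, hu (t, x)]
  subst hm₁ hm₂ hm₃ hm₄
  linear_combination cos_mul_pow_four_ode ha (fun _ => rfl) m₅ (x - t)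
end

section
/- Let m₁, m₂, m₃, m₄, m₅, c₂ be real constants with m₁,…,m₅ nonzero, m₃ + m₅ ≠ 0 and m₄/(m₃+m₅) ≤ 0, let c₁ be a nonzero constant with c₁m₁/m₂ > 0, and let k₂ ∈ ℝ. Set k := √(−m₄/(m₃+m₅)), b := √(c₁m₁/m₂) and a₀ := c₁b³/m₂. Let G : ℝ → ℝ be differentiable with G(t) ≠ 0 for all t, let H : ℝ → ℝ be differentiable with H(t) ≠ 0 for all t, and let 𝒢 : ℝ → ℝ be differentiable with 𝒢'(t) = G(t) for all t. Then the function ũ(t̃,x̃) := (m₃c₁G(t̃)/(m₂H(t̃))) · c₂ · exp( k( b(x̃+k₂) + (m₄(m₂m₅ + m₂m₃ − m₁m₄)/(m₃+m₅)²) · a₀ · 𝒢(t̃) ) ) satisfies, at every point (t̃,x̃): ũ_{t̃} + G(t̃) ũ_{x̃x̃x̃x̃x̃} + c₁G(t̃) ũ_{x̃x̃x̃} + H(t̃) ũ ũ_{x̃x̃x̃} + (c₁m₁m₄/(m₂m₃))H(t̃) ũ ũ_{x̃} + (m₅/m₃)H(t̃) ũ_{x̃} ũ_{x̃x̃} + ((G(t̃)H'(t̃)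 − G'(t̃)H(t̃))/(G(t̃)H(t̃))) ũ = 0. -/
/-!
Write `λ = k b` and `D` for the coefficient of `𝒢` in the exponent. Then `ũ` separates as
`A(t) exp(λ x + φ(t))` with `A = (m₃ c₁ c₂ / m₂) G / H` and `φ' = k D G`, and every `x`-derivative
multiplies `ũ` by `λ`. The equation therefore splits into three identities: the damping coefficient is
exactly `-A'/A`; the quadratic terms cancel because `(m₃ + m₅) λ² = -c₁ m₁ m₄ / m₂`; the linear terms
cancel by the dispersion relation `λ⁵ + c₁ λ³ + k D = 0`, which is what the velocity `a` of the
constant-coefficient solution encodes.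
-/

open Real

section SeparableExp

variable {u : ℝ × ℝ → ℝ} {A φ : ℝ → ℝ} {r : ℝ}

theorem pdx_of_eq_mul_exp (hu : ∀ t y, u (t, y) = A t * exp (r * y + φ t)) (n : ℕ) (t x : ℝ) :
    pdx n u t x = r ^ n * u (t, x) := by
  have hfun : (fun y => u (t, y)) = fun y => A t * exp (φ t) * exp (r * y) := by
    funext y
    rw [hu, add_comm, exp_add]
    ring
  rw [pdx, hfun, iteratedDeriv_const_mul_field, iteratedDeriv_exp_const_mul, hu, add_comm,
    exp_add]
  ring

theorem pdt_of_eq_mul_exp (hu : ∀ t y, u (t, y) = A t * exp (r * y + φ t)) {t A' φ' : ℝ}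
    (hA : HasDerivAt A A' t) (hφ : HasDerivAt φ φ' t) (x : ℝ) :
    pdt u t x = A' * exp (r * x + φ t) + φ' * u (t, x) := by
  have hfun : (fun s => u (s, x)) = fun s => A s * exp (r * x + φ s) := funext fun s => hu s x
  have hexp : HasDerivAt (fun s => exp (r * x + φ s)) (exp (r * x + φ t) * φ') t :=
    (hφ.const_add (r * x)).exp
  rw [pdt, hfun, (hA.fun_mul hexp).deriv, hu]
  ring

end SeparableExp

theorem kdv5_nonlinear_balance {m₁ m₂ m₃ m₄ m₅ c₁ k b : ℝ} (hm₂ : m₂ ≠ 0) (hm₃ : m₃ ≠ 0)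
    (hne : m₃ + m₅ ≠ 0) (hk2 : k ^ 2 = -m₄ / (m₃ + m₅)) (hb2 : b ^ 2 = c₁ * m₁ / m₂) :
    (k * b) ^ 3 + c₁ * m₁ * m₄ / (m₂ * m₃) * (k * b) + m₅ / m₃ * (k * b) * (k * b) ^ 2 = 0 := by
  have hkb2 : (k * b) ^ 2 = -m₄ / (m₃ + m₅) * (c₁ * m₁ / m₂) := by rw [mul_pow, hk2, hb2]
  calc (k * b) ^ 3 + c₁ * m₁ * m₄ / (m₂ * m₃) * (k * b) + m₅ / m₃ * (k * b) * (k * b) ^ 2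
      = k * b / m₃ * ((m₃ + m₅) * (k * b) ^ 2 + c₁ * m₁ * m₄ / m₂) := by
        field_simp
        ring
    _ = 0 := by
        rw [hkb2]
        field_simp
        ring

theorem kdv5_dispersion_relation {m₁ m₂ m₃ m₄ m₅ c₁ k b : ℝ} (hm₂ : m₂ ≠ 0)
    (hne : m₃ + m₅ ≠ 0) (hk2 : k ^ 2 = -m₄ / (m₃ + m₅)) (hb2 : b ^ 2 = c₁ * m₁ / m₂) :
    (k * b) ^ 5 + c₁ * (k * b) ^ 3
      + k * (m₄ * (m₂ * m₅ + m₂ * m₃ - m₁ * m₄) / (m₃ + m₅) ^ 2 * (c₁ * b ^ 3 / m₂)) = 0 := by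
  have hm₄ : m₄ = -k ^ 2 * (m₃ + m₅) := by
    field_simp at hk2
    linarith
  have hm₁ : c₁ * m₁ = b ^ 2 * m₂ := by
    field_simp at hb2
    linarith
  rw [hm₄]
  field_simp
  linear_combination (-k ^ 5 * b ^ 3 * (m₃ + m₅)) * hm₁

theorem exponential_solution_damped_equation_general
    (m₁ m₂ m₃ m₄ m₅ c₂ : ℝ)
    (hm₂ : m₂ ≠ 0) (hm₃ : m₃ ≠ 0)
    (hne : m₃ + m₅ ≠ 0) (hsign : m₄ / (m₃ + m₅) ≤ 0)
    (c₁ : ℝ) (hpos : c₁ * m₁ / m₂ > 0) (k₂ : ℝ)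
    (k b a₀ : ℝ) (hk : k = Real.sqrt (-m₄ / (m₃ + m₅)))
    (hb : b = Real.sqrt (c₁ * m₁ / m₂)) (ha₀ : a₀ = c₁ * b ^ 3 / m₂)
    (G : ℝ → ℝ) (hG : Differentiable ℝ G) (hGne : ∀ t, G t ≠ 0)
    (H : ℝ → ℝ) (hH : Differentiable ℝ H) (hHne : ∀ t, H t ≠ 0)
    (𝒢 : ℝ → ℝ) (h𝒢 : Differentiable ℝ 𝒢) (h𝒢' : ∀ t, deriv 𝒢 t = G t)
    (ut : ℝ × ℝ → ℝ)
    (hut : ∀ p : ℝ × ℝ,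
      ut p = m₃ * c₁ * G p.1 / (m₂ * H p.1) * c₂
        * Real.exp (k * (b * (p.2 + k₂)
            + m₄ * (m₂ * m₅ + m₂ * m₃ - m₁ * m₄) / (m₃ + m₅) ^ 2 * a₀ * 𝒢 p.1))) :
    ∀ t x,
      pdt ut t x + G t * pdx 5 ut t x + c₁ * G t * pdx 3 ut t x
        + H t * ut (t, x) * pdx 3 ut t x
        + c₁ * m₁ * m₄ / (m₂ * m₃) * H t * ut (t, x) * pdx 1 ut t x
        + m₅ / m₃ * H t * pdx 1 ut t x * pdx 2 ut t x
        + (G t * deriv H t - deriv G t * H t) / (G t * H t) * ut (t, x) = 0 := by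
  intro t x
  have hk2 : k ^ 2 = -m₄ / (m₃ + m₅) := by
    rw [hk, sq_sqrt (by rw [neg_div]; linarith)]
  have hb2 : b ^ 2 = c₁ * m₁ / m₂ := by rw [hb, sq_sqrt hpos.le]
  set D := m₄ * (m₂ * m₅ + m₂ * m₃ - m₁ * m₄) / (m₃ + m₅) ^ 2 * a₀
  set K := m₃ * c₁ * c₂ / m₂
  have hu : ∀ s y, ut (s, y) = K * (G s / H s) * exp (k * b * y + (k * b * k₂ + k * D * 𝒢 s)) := by
    intro s y
    rw [hut, show k * (b * (y + k₂) + D * 𝒢 s) = k * b * y + (k * b * k₂ + k * D * 𝒢 s) by ring]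
    ring
  have hA : HasDerivAt (fun s => K * (G s / H s))
      (K * ((deriv G t * H t - G t * deriv H t) / H t ^ 2)) t :=
    ((hG t).hasDerivAt.div (hH t).hasDerivAt (hHne t)).const_mul K
  have hφ : HasDerivAt (fun s => k * b * k₂ + k * D * 𝒢 s) (k * D * G t) t := by
    simpa [h𝒢' t] using ((h𝒢 t).hasDerivAt.const_mul (k * D)).const_add (k * b * k₂)
  have hdamp : K * ((deriv G t * H t - G t * deriv H t) / H t ^ 2)
      + (G t * deriv H t - deriv G t * H t) / (G t * H t) * (K * (G t / H t)) = 0 := by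
    field_simp [hGne t, hHne t]
    ring
  have hdisp : (k * b) ^ 5 + c₁ * (k * b) ^ 3 + k * D = 0 := by
    simpa only [D, ha₀] using kdv5_dispersion_relation hm₂ hne hk2 hb2
  have hbal := kdv5_nonlinear_balance hm₂ hm₃ hne hk2 hb2
  rw [pdt_of_eq_mul_exp hu hA hφ, pdx_of_eq_mul_exp hu, pdx_of_eq_mul_exp hu,
    pdx_of_eq_mul_exp hu, pdx_of_eq_mul_exp hu, hu]
  set E := exp (k * b * x + (k * b * k₂ + k * D * 𝒢 t))
  set A := K * (G t / H t)
  linear_combination E * hdamp + G t * A * E * hdisp + H t * (A * E) ^ 2 * hbal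

/-- The transported exponential solution of the damped variable-coefficient
fifth-order KdV equation (27). -/
theorem exponential_solution_damped_equation
    (m₁ m₂ m₃ m₄ m₅ c₂ : ℝ)
    (hm₁ : m₁ ≠ 0) (hm₂ : m₂ ≠ 0) (hm₃ : m₃ ≠ 0) (hm₄ : m₄ ≠ 0) (hm₅ : m₅ ≠ 0)
    (hne : m₃ + m₅ ≠ 0) (hsign : m₄ / (m₃ + m₅) ≤ 0)
    (c₁ : ℝ) (hc₁ : c₁ ≠ 0) (hpos : c₁ * m₁ / m₂ > 0) (k₂ : ℝ)
    (k b a₀ : ℝ) (hk : k = Real.sqrt (-m₄ / (m₃ + m₅)))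
    (hb : b = Real.sqrt (c₁ * m₁ / m₂)) (ha₀ : a₀ = c₁ * b ^ 3 / m₂)
    (G : ℝ → ℝ) (hG : Differentiable ℝ G) (hGne : ∀ t, G t ≠ 0)
    (H : ℝ → ℝ) (hH : Differentiable ℝ H) (hHne : ∀ t, H t ≠ 0)
    (𝒢 : ℝ → ℝ) (h𝒢 : Differentiable ℝ 𝒢) (h𝒢' : ∀ t, deriv 𝒢 t = G t)
    (ut : ℝ × ℝ → ℝ)
    (hut : ∀ p : ℝ × ℝ,
      ut p = m₃ * c₁ * G p.1 / (m₂ * H p.1) * c₂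
        * Real.exp (k * (b * (p.2 + k₂)
            + m₄ * (m₂ * m₅ + m₂ * m₃ - m₁ * m₄) / (m₃ + m₅) ^ 2 * a₀ * 𝒢 p.1))) :
    ∀ t x,
      pdt ut t x + G t * pdx 5 ut t x + c₁ * G t * pdx 3 ut t x
        + H t * ut (t, x) * pdx 3 ut t x
        + c₁ * m₁ * m₄ / (m₂ * m₃) * H t * ut (t, x) * pdx 1 ut t x
        + m₅ / m₃ * H t * pdx 1 ut t x * pdx 2 ut t x
        + (G t * deriv H t - deriv G t * H t) / (G t * H t) * ut (t, x) = 0 :=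
  exponential_solution_damped_equation_general m₁ m₂ m₃ m₄ m₅ c₂ hm₂ hm₃ hne hsign c₁ hpos k₂ k b a₀
    hk hb ha₀ G hG hGne H hH hHne 𝒢 h𝒢 h𝒢' ut hut
end
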